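/- arXiv:2203.03085 — 10 statements merged into one kernel-verified Lean document; each statement's English description precedes it below -/
import Mathlib

section
/- For positive integers m and n with m > 1, the number of integers j with 1 ≤ j ≤ n and gcd(j,m) = 1 differs from (φ(m)/m)·n by strictly less than 2^(ω(m)-1), where ω(m) is the number of distinct prime factors of m and φ is Euler's totient function. -/
/-!
Legendre's sieve writes the count as `∑_{d ∣ m} μ(d) ⌊n/d⌋`, and Möbius inversion of
`∑_{d ∣ k} φ(d) = k` writes `φ(m)/m · n` as `∑_{d ∣ m} μ(d) n/d`. The difference is
`-∑_{d ∣ m} μ(d) {n/d}` with fractional parts in `[0, 1)`. Since `∑_{d ∣ m} μ(d) = 0` for `m > 1`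
while `m` has `2^ω(m)` squarefree divisors, exactly `2^(ω(m)-1)` divisors have `μ = 1` and as
many have `μ = -1`, so both the positive and the negative part of that sum lie in
`[0, 2^(ω(m)-1))`.
-/

open Finset ArithmeticFunction
open scoped ArithmeticFunction.Moebius

lemma sum_divisors_moebius (n : ℕ) : ∑ d ∈ n.divisors, μ d = if n = 1 then 1 else 0 := by
  rw [← coe_mul_zeta_apply, moebius_mul_coe_zeta, one_apply]

lemma sum_moebius_mul_eq_sub {R : Type*} [CommRing R] (s : Finset ℕ) (x : ℕ → R) :
    ∑ d ∈ s, (μ d : R) * x d = ∑ d ∈ s with μ d = 1, x d - ∑ d ∈ s with μ d = -1, x d := by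
  rw [sum_filter, sum_filter, ← sum_sub_distrib]
  refine sum_congr rfl fun d _ => ?_
  rcases moebius_eq_or d with h | h | h <;> simp [h]

lemma card_filter_moebius_add (s : Finset ℕ) :
    #{d ∈ s | μ d = 1} + #{d ∈ s | μ d = -1} = #{d ∈ s | Squarefree d} := by
  rw [← card_union_of_disjoint (disjoint_filter.2 fun d _ h1 h2 => by omega), ← filter_or]
  congr 1
  ext d
  simp only [mem_filter, ← moebius_ne_zero_iff_eq_or, moebius_ne_zero_iff_squarefree]

lemma card_divisors_filter_squarefree {n : ℕ} (hn : n ≠ 0) :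
    #{d ∈ n.divisors | Squarefree d} = 2 ^ #n.primeFactors := by
  have h := Nat.sum_divisors_filter_squarefree hn (f := fun _ => 1)
  simpa [Nat.factors_eq] using h

lemma card_divisors_filter_moebius_eq_one_and_neg_one {m : ℕ} (hm : 1 < m) :
    #{d ∈ m.divisors | μ d = 1} = 2 ^ (#m.primeFactors - 1) ∧
      #{d ∈ m.divisors | μ d = -1} = 2 ^ (#m.primeFactors - 1) := by
  have hdiff : (#{d ∈ m.divisors | μ d = 1} : ℤ) = #{d ∈ m.divisors | μ d = -1} := by
    have h := sum_moebius_mul_eq_sub m.divisors (fun _ => (1 : ℤ))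
    simp only [mul_one, Int.cast_id, sum_const, nsmul_eq_mul, sum_divisors_moebius,
      if_neg hm.ne'] at h
    omega
  have hsum := card_filter_moebius_add m.divisors
  rw [card_divisors_filter_squarefree (by omega)] at hsum
  have hω : 0 < #m.primeFactors := card_pos.2 (Nat.nonempty_primeFactors.2 hm)
  rw [← Nat.two_pow_pred_mul_two hω] at hsum
  omega

lemma card_filter_gcd_eq_one_Icc {m : ℕ} (hm : m ≠ 0) (n : ℕ) :
    (#{j ∈ Icc 1 n | j.gcd m = 1} : ℤ) = ∑ d ∈ m.divisors, μ d * (n / d : ℕ) := by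
  have hindicator (j : ℕ) :
      (if j.gcd m = 1 then (1 : ℤ) else 0) = ∑ d ∈ m.divisors with d ∣ j, μ d := by
    have hdiv : (j.gcd m).divisors = {d ∈ m.divisors | d ∣ j} := by
      ext d
      simp [Nat.dvd_gcd_iff, hm, and_comm]
    rw [← hdiv, sum_divisors_moebius]
  have hmultiples (d : ℕ) : #{j ∈ Icc 1 n | d ∣ j} = n / d := Nat.Ioc_filter_dvd_card_eq_div n d
  calc (#{j ∈ Icc 1 n | j.gcd m = 1} : ℤ)
      = ∑ j ∈ Icc 1 n, ∑ d ∈ m.divisors with d ∣ j, μ d := by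
        rw [← sum_congr rfl fun j _ => hindicator j, ← sum_boole]
    _ = ∑ d ∈ m.divisors, μ d * (n / d : ℕ) := by
        simp_rw [sum_filter]
        rw [sum_comm]
        refine sum_congr rfl fun d _ => ?_
        rw [← sum_filter, sum_const, hmultiples, nsmul_eq_mul, mul_comm]

lemma totient_div_mul_eq_sum_moebius (m : ℕ) (x : ℝ) :
    (m.totient : ℝ) / m * x = ∑ d ∈ m.divisors, μ d * (x / d) := by
  rcases eq_or_ne m 0 with rfl | hm
  · simp
  have hinv : (m.totient : ℝ) = ∑ d ∈ m.divisors, (μ d : ℝ) * ((m / d : ℕ) : ℝ) := by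
    rw [← Nat.sum_divisorsAntidiagonal (f := fun d e => (μ d : ℝ) * e)]
    refine ((sum_eq_iff_sum_mul_moebius_eq (f := fun k => (k.totient : ℝ))).1 (fun k _ => ?_) m
      (Nat.pos_of_ne_zero hm)).symm
    exact_mod_cast Nat.sum_totient k
  rw [hinv, sum_div, sum_mul]
  refine sum_congr rfl fun d hd => ?_
  have hd0 : (d : ℝ) ≠ 0 := Nat.cast_ne_zero.2 (Nat.pos_of_mem_divisors hd).ne'
  rw [Nat.cast_div (Nat.dvd_of_mem_divisors hd) hd0]
  field_simp

lemma sum_nonneg_and_lt_card {ι : Type*} {s : Finset ι} (hs : s.Nonempty) {x : ι → ℝ}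
    (hx : ∀ i ∈ s, 0 ≤ x i ∧ x i < 1) : 0 ≤ ∑ i ∈ s, x i ∧ ∑ i ∈ s, x i < #s := by
  refine ⟨sum_nonneg fun i hi => (hx i hi).1, ?_⟩
  simpa using sum_lt_sum_of_nonempty hs fun i hi => (hx i hi).2

lemma abs_sum_divisors_moebius_mul_lt {m : ℕ} (hm : 1 < m) {x : ℕ → ℝ}
    (hx : ∀ d ∈ m.divisors, 0 ≤ x d ∧ x d < 1) :
    |∑ d ∈ m.divisors, μ d * x d| < 2 ^ (#m.primeFactors - 1) := by
  obtain ⟨hpos, hneg⟩ := card_divisors_filter_moebius_eq_one_and_neg_one hm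
  have bound (ε : ℤ) (hcard : #{d ∈ m.divisors | μ d = ε} = 2 ^ (#m.primeFactors - 1)) :
      0 ≤ ∑ d ∈ m.divisors with μ d = ε, x d ∧
        ∑ d ∈ m.divisors with μ d = ε, x d < 2 ^ (#m.primeFactors - 1) := by
    have hne : ({d ∈ m.divisors | μ d = ε} : Finset ℕ).Nonempty := by
      rw [← card_pos, hcard]
      positivity
    have h := sum_nonneg_and_lt_card hne fun d hd => hx d (mem_filter.1 hd).1
    rwa [hcard, Nat.cast_pow, Nat.cast_ofNat] at h
  rw [sum_moebius_mul_eq_sub, abs_sub_lt_iff]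
  have := bound 1 hpos
  have := bound (-1) hneg
  constructor <;> linarith

theorem stmt_0_general (m n : ℕ) (hm : 1 < m) :
    |((((Finset.Icc 1 n).filter (fun j => Nat.gcd j m = 1)).card : ℝ)
      - (Nat.totient m : ℝ) / m * n)| < 2 ^ (m.primeFactors.card - 1) := by
  have hcount := congrArg (Int.cast : ℤ → ℝ) (card_filter_gcd_eq_one_Icc (m := m) (by omega) n)
  simp only [Int.cast_natCast, Int.cast_sum, Int.cast_mul] at hcount
  have herror : (#{j ∈ Icc 1 n | j.gcd m = 1} : ℝ) - m.totient / m * n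
      = -∑ d ∈ m.divisors, μ d * ((n : ℝ) / d - ⌊(n : ℝ) / d⌋₊) := by
    rw [hcount, totient_div_mul_eq_sum_moebius, ← sum_neg_distrib, ← sum_sub_distrib]
    refine sum_congr rfl fun d _ => ?_
    rw [Nat.floor_div_eq_div]
    ring
  rw [herror, abs_neg]
  refine abs_sum_divisors_moebius_mul_lt hm fun d _ => ⟨?_, ?_⟩
  · exact sub_nonneg.2 (Nat.floor_le (by positivity))
  · exact sub_lt_iff_lt_add'.2 (Nat.lt_floor_add_one _)

theorem stmt_0 (m n : ℕ) (hm : 1 < m) (hn : 0 < n) :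
    |((((Finset.Icc 1 n).filter (fun j => Nat.gcd j m = 1)).card : ℝ)
      - (Nat.totient m : ℝ) / m * n)| < 2 ^ (m.primeFactors.card - 1) :=
  stmt_0_general m n hm
end

section
/- For positive integers m ≤ n, the number of integers j with 1 ≤ j ≤ n and gcd(j,m) = 1 is greater than (φ(m)/m)·n − √n. -/
/-!
By Möbius inversion the count is `∑_{d ∣ m} μ(d) ⌊n/d⌋`, while `(φ(m)/m) n = ∑_{d ∣ m} μ(d) n/d`.
The difference `μ(d) (⌊n/d⌋ - n/d)` is nonnegative unless `μ(d) = 1`, where it exceeds `-1`, so the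
count exceeds the main term by more than `-#{d ∣ m | μ(d) = 1}`. Since `∑_{d ∣ m} μ(d) = 0` and
`∑_{d ∣ m} μ(d)² = 2^ω(m)`, that number is `2^(ω(m)-1)` for `m > 1`, and its square is at most
`∏_{p ∣ m} p ≤ m ≤ n` because every prime other than `2` and `3` is at least `4`.
-/

open Finset ArithmeticFunction
open scoped ArithmeticFunction.Moebius

namespace Nat

theorem sum_divisors_moebius (n : ℕ) : ∑ d ∈ n.divisors, μ d = if n = 1 then 1 else 0 := by
  simpa only [coe_mul_zeta_apply, one_apply] using
    congrArg (fun f : ArithmeticFunction ℤ => f n) moebius_mul_coe_zeta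

theorem divisors_gcd {j m : ℕ} (hm : m ≠ 0) : (j.gcd m).divisors = {d ∈ m.divisors | d ∣ j} := by
  ext d
  simp [Nat.dvd_gcd_iff, hm, and_comm]

theorem card_filter_gcd_eq_one_eq_sum_moebius {m : ℕ} (hm : m ≠ 0) (N : ℕ) :
    (#{j ∈ Icc 1 N | j.gcd m = 1} : ℤ) = ∑ d ∈ m.divisors, μ d * (N / d : ℕ) := by
  have hindicator (j : ℕ) : (if j.gcd m = 1 then 1 else 0 : ℤ) =
      ∑ d ∈ m.divisors, if d ∣ j then μ d else 0 := by
    rw [← sum_divisors_moebius, divisors_gcd hm, sum_filter]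
  rw [card_filter, Nat.cast_sum]
  simp only [Nat.cast_ite, Nat.cast_one, Nat.cast_zero, hindicator]
  rw [sum_comm]
  refine sum_congr rfl fun d _ => ?_
  rw [← sum_filter, sum_const, ← Nat.Ioc_filter_dvd_card_eq_div, ← zero_add 1,
    Icc_add_one_left_eq_Ioc, nsmul_eq_mul, mul_comm]

theorem sum_moebius_mul_div_eq_totient {m : ℕ} (hm : m ≠ 0) :
    ∑ d ∈ m.divisors, μ d * (m / d : ℕ) = (φ m : ℤ) := by
  rw [← card_filter_gcd_eq_one_eq_sum_moebius hm, ← filter_coprime_Ico_eq_totient m 1, add_comm,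
    Ico_add_one_right_eq_Icc]
  simp only [Nat.coprime_comm, Nat.Coprime]

theorem totient_div_mul_eq_sum_moebius {m : ℕ} (hm : m ≠ 0) (x : ℝ) :
    (φ m : ℝ) / m * x = ∑ d ∈ m.divisors, μ d * (x / d) := by
  have h := congrArg (Int.cast : ℤ → ℝ) (sum_moebius_mul_div_eq_totient hm)
  simp only [Int.cast_sum, Int.cast_mul, Int.cast_natCast] at h
  rw [← h, sum_div, sum_mul]
  refine sum_congr rfl fun d hd => ?_
  have hd0 : (d : ℝ) ≠ 0 := by exact_mod_cast (Nat.pos_of_mem_divisors hd).ne'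
  rw [Nat.cast_div (Nat.dvd_of_mem_divisors hd) hd0]
  field_simp

theorem neg_ite_le_moebius_mul_floor_sub (d : ℕ) {y : ℝ} (hy : 0 ≤ y) :
    -(if μ d = 1 then 1 else 0 : ℝ) ≤ μ d * (⌊y⌋₊ - y) := by
  have hfloor_le := Nat.floor_le hy
  have hlt_floor := Nat.lt_floor_add_one y
  rcases moebius_eq_or d with h | h | h <;> simp [h] <;> linarith

theorem neg_card_lt_sum_moebius_mul_floor_sub {m : ℕ} (hm : m ≠ 0) {x : ℝ} (hx : 0 ≤ x) :
    -(#{d ∈ m.divisors | μ d = 1} : ℝ) < ∑ d ∈ m.divisors, μ d * (⌊x / d⌋₊ - x / d) := by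
  rw [← sum_boole, ← sum_neg_distrib]
  refine sum_lt_sum (fun d _ => neg_ite_le_moebius_mul_floor_sub d (by positivity))
    ⟨1, one_mem_divisors.mpr hm, ?_⟩
  simpa [add_comm] using Nat.lt_floor_add_one x

theorem card_divisors_filter_squarefree {m : ℕ} (hm : m ≠ 0) :
    #{d ∈ m.divisors | Squarefree d} = 2 ^ #m.primeFactors := by
  rw [card_eq_sum_ones, sum_divisors_filter_squarefree hm, sum_const, card_powerset, smul_eq_mul,
    mul_one, Nat.factors_eq]
  rfl

theorem two_mul_card_moebius_eq_one {m : ℕ} (hm : m ≠ 0) :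
    2 * #{d ∈ m.divisors | μ d = 1} = 2 ^ #m.primeFactors + if m = 1 then 1 else 0 := by
  have hterm (d : ℕ) : μ d ^ 2 + μ d = 2 * if μ d = 1 then 1 else 0 := by
    rcases moebius_eq_or d with h | h | h <;> simp [h]
  have h : ∑ d ∈ m.divisors, (μ d ^ 2 + μ d) = 2 * #{d ∈ m.divisors | μ d = 1} := by
    simp only [hterm, ← mul_sum, sum_boole]
  simp only [sum_add_distrib, sum_divisors_moebius, moebius_sq, sum_boole,
    card_divisors_filter_squarefree hm] at h
  exact_mod_cast h.symm

theorem four_pow_card_le_four_mul_prod_of_prime {P : Finset ℕ} (hP : ∀ p ∈ P, p.Prime) :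
    4 ^ #P ≤ 4 * ∏ p ∈ P, p := by
  have hsmall : {p ∈ P | p < 4} ⊆ {2, 3} := by
    intro p hp
    obtain ⟨hpP, hp4⟩ := mem_filter.mp hp
    have := (hP p hpP).two_le
    interval_cases p <;> simp
  have hsmall_bound : ∀ S ∈ ({2, 3} : Finset ℕ).powerset, 4 ^ #S ≤ 4 * ∏ p ∈ S, p := by decide
  have hbig : 4 ^ #{p ∈ P | ¬p < 4} ≤ ∏ p ∈ P with ¬p < 4, p :=
    pow_card_le_prod _ _ _ fun p hp => not_lt.mp (mem_filter.mp hp).2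
  calc 4 ^ #P = 4 ^ #{p ∈ P | p < 4} * 4 ^ #{p ∈ P | ¬p < 4} := by
        rw [← pow_add, card_filter_add_card_filter_not]
    _ ≤ (4 * ∏ p ∈ P with p < 4, p) * ∏ p ∈ P with ¬p < 4, p :=
        Nat.mul_le_mul (hsmall_bound _ (mem_powerset.mpr hsmall)) hbig
    _ = 4 * ∏ p ∈ P, p := by rw [mul_assoc, prod_filter_mul_prod_filter_not]

theorem card_moebius_eq_one_sq_le {m : ℕ} (hm : m ≠ 0) :
    #{d ∈ m.divisors | μ d = 1} ^ 2 ≤ m := by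
  have h2 := two_mul_card_moebius_eq_one hm
  rcases eq_or_ne m 1 with rfl | hm1
  · simp at h2
    simp [h2]
  rw [if_neg hm1, add_zero] at h2
  have hprod : 4 ^ #m.primeFactors ≤ 4 * m :=
    (four_pow_card_le_four_mul_prod_of_prime fun p => Nat.prime_of_mem_primeFactors).trans
      (Nat.mul_le_mul_left 4 (Nat.le_of_dvd (Nat.pos_of_ne_zero hm) (prod_primeFactors_dvd m)))
  have : (2 * #{d ∈ m.divisors | μ d = 1}) ^ 2 ≤ 4 * m := by
    rwa [h2, ← pow_mul, mul_comm, pow_mul]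
  nlinarith

end Nat

theorem stmt_2 (m n : ℕ) (hm : 0 < m) (hmn : m ≤ n) :
    (((Finset.Icc 1 n).filter (fun j => Nat.gcd j m = 1)).card : ℝ)
      > (Nat.totient m : ℝ) / m * n - Real.sqrt n := by
  have hm0 := hm.ne'
  have hcount : (#{j ∈ Icc 1 n | j.gcd m = 1} : ℝ) =
      ∑ d ∈ m.divisors, μ d * (⌊(n : ℝ) / d⌋₊ : ℝ) := by
    simpa only [Int.cast_sum, Int.cast_mul, Int.cast_natCast, Nat.floor_div_eq_div] using
      congrArg (Int.cast : ℤ → ℝ) (Nat.card_filter_gcd_eq_one_eq_sum_moebius hm0 n)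
  have herror := Nat.neg_card_lt_sum_moebius_mul_floor_sub hm0 (Nat.cast_nonneg (α := ℝ) n)
  have hsqrt : (#{d ∈ m.divisors | μ d = 1} : ℝ) ≤ √n := by
    rw [Real.le_sqrt (by positivity) (by positivity)]
    exact_mod_cast (Nat.card_moebius_eq_one_sq_le hm0).trans hmn
  rw [Nat.totient_div_mul_eq_sum_moebius hm0, hcount]
  simp only [mul_sub, sum_sub_distrib] at herror
  linarith
end

section
/- Let C(n) be the number of coprime permutations of {1,…,n}, and let C_0(n) be the number of bijections f from the set {1,3,…,2n−1} of the first n odd positive integers to {1,…,n} such that gcd(i, f(i)) = 1 for each odd i < 2n. Then C(2n) = C_0(n)². -/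
/-- The number of coprime permutations of `{1,…,n}`: permutations `σ` of `{1,…,n}`
(encoded as permutations of `Fin n` via `j ↦ j+1`) with `gcd(j, σ j) = 1` for all `j`. -/
def C (n : ℕ) : ℕ :=
  Fintype.card {σ : Equiv.Perm (Fin n) // ∀ j, Nat.gcd (j.val + 1) ((σ j).val + 1) = 1}

/-- The number of coprime bijections from the first `n` odd numbers `{1,3,…,2n-1}`
(encoded as `i ↦ 2i+1`) to `{1,…,n}` (encoded as `j ↦ j+1`). -/
def C0 (n : ℕ) : ℕ :=
  Fintype.card {f : Equiv.Perm (Fin n) // ∀ i, Nat.gcd (2 * i.val + 1) ((f i).val + 1) = 1}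

/-!
Split `{1,…,2n}` into its odd part `2i+1` and its even part `2i+2` (`i < n`). Two even numbers
are never coprime, so a coprime permutation sends the `n` even numbers injectively, hence
bijectively, into the `n` odd ones; it therefore exchanges the two parts and is a pair of
coprime bijections odd → even and even → odd. Halving the even numbers identifies the first
kind with the bijections counted by `C0 n`, and inverting identifies the second kind with them.
-/

namespace Equiv.Perm

variable {α : Type*}

def crossSumCongr (f g : Perm α) : Perm (α ⊕ α) :=
  (sumCongr f g).trans (sumComm α α)

@[simp]
theorem crossSumCongr_inl (f g : Perm α) (a : α) :
    crossSumCongr f g (Sum.inl a) = Sum.inr (f a) := rfl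

@[simp]
theorem crossSumCongr_inr (f g : Perm α) (a : α) :
    crossSumCongr f g (Sum.inr a) = Sum.inl (g a) := rfl

theorem crossSumCongr_inj {f g f' g' : Perm α} :
    crossSumCongr f g = crossSumCongr f' g' ↔ f = f' ∧ g = g' := by
  refine ⟨fun h => ⟨?_, ?_⟩, by rintro ⟨rfl, rfl⟩; rfl⟩ <;> ext a
  · simpa using DFunLike.congr_fun h (Sum.inl a)
  · simpa using DFunLike.congr_fun h (Sum.inr a)

theorem exists_crossSumCongr_eq [Finite α] {τ : Perm (α ⊕ α)}
    (hτ : ∀ a, (τ (Sum.inr a)).isLeft) : ∃ f g : Perm α, crossSumCongr f g = τ := by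
  set ρ : Perm (α ⊕ α) := τ.trans (sumComm α α)
  have hρ : Set.MapsTo ρ (Set.range Sum.inr) (Set.range Sum.inr) := by
    rintro _ ⟨a, rfl⟩
    obtain ⟨b, hb⟩ := Sum.isLeft_iff.mp (hτ a)
    exact ⟨b, by simp [ρ, hb]⟩
  -- finiteness: `ρ` keeps the right summand, hence also the left one
  obtain ⟨⟨f, g⟩, hfg⟩ := mem_sumCongrHom_range_of_perm_mapsTo_inl
    ((perm_mapsTo_inl_iff_mapsTo_inr ρ).mpr hρ)
  refine ⟨f, g, ?_⟩
  ext1 x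
  simpa [crossSumCongr, ρ] using congrArg (fun σ : Perm (α ⊕ α) => sumComm α α (σ x)) hfg

noncomputable def subtypeCrossSumCongrEquiv [Finite α] (R : α ⊕ α → α ⊕ α → Prop)
    (hR : ∀ a b, ¬R (Sum.inr a) (Sum.inr b)) :
    {f : Perm α // ∀ a, R (Sum.inl a) (Sum.inr (f a))} ×
        {g : Perm α // ∀ a, R (Sum.inr a) (Sum.inl (g a))} ≃
      {τ : Perm (α ⊕ α) // ∀ x, R x (τ x)} :=
  Equiv.ofBijective
    (fun p => ⟨crossSumCongr p.1.1 p.2.1, by rintro (a | a) <;> simp [p.1.2, p.2.2]⟩)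
    ⟨fun p q h => by
      have := crossSumCongr_inj.mp (congrArg Subtype.val h)
      exact Prod.ext (Subtype.ext this.1) (Subtype.ext this.2),
     fun ⟨τ, hτ⟩ => by
      have hleft : ∀ a, (τ (Sum.inr a)).isLeft := fun a => by
        have := hτ (Sum.inr a)
        cases h : τ (Sum.inr a) with
        | inl b => rfl
        | inr b => exact absurd (h ▸ this) (hR a b)
      obtain ⟨f, g, rfl⟩ := exists_crossSumCongr_eq hleft
      exact ⟨(⟨f, fun a => by simpa using hτ (Sum.inl a)⟩,
        ⟨g, fun a => by simpa using hτ (Sum.inr a)⟩), rfl⟩⟩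

end Equiv.Perm

open Nat Equiv

def finSumFinInterleave (n : ℕ) : Fin n ⊕ Fin n ≃ Fin (2 * n) where
  toFun := Sum.elim (fun i => ⟨2 * i, by omega⟩) (fun i => ⟨2 * i + 1, by omega⟩)
  invFun j := if j.val % 2 = 0 then .inl ⟨j / 2, by omega⟩ else .inr ⟨j / 2, by omega⟩
  left_inv := by
    rintro (i | i)
    · simp
    · simp [Fin.ext_iff]; omega
  right_inv j := by
    by_cases h : j.val % 2 = 0 <;> simp only [h, ↓reduceIte] <;> ext <;> simp <;> omega

theorem coprime_two_mul_iff_of_odd {m : ℕ} (hm : Odd m) (k : ℕ) :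
    Coprime m (2 * k) ↔ Coprime m k := by
  simp [coprime_mul_iff_right, hm]

theorem C_two_mul_eq_card (n : ℕ) :
    C (2 * n) = Fintype.card {τ : Perm (Fin n ⊕ Fin n) //
      ∀ x, Coprime ((finSumFinInterleave n x).val + 1)
        ((finSumFinInterleave n (τ x)).val + 1)} :=
  Fintype.card_congr <| (subtypeEquiv (finSumFinInterleave n).permCongr fun _ =>
    ((finSumFinInterleave n).forall_congr fun x => by simp [Coprime])).symm

theorem card_coprime_odd_to_even (n : ℕ) :
    Fintype.card {f : Perm (Fin n) // ∀ a : Fin n, Coprime (2 * a + 1) (2 * f a + 1 + 1)} =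
      C0 n :=
  Fintype.card_congr <| subtypeEquivRight fun f => forall_congr' fun a => by
    rw [show 2 * (f a : ℕ) + 1 + 1 = 2 * (f a + 1) by ring,
      coprime_two_mul_iff_of_odd (odd_two_mul_add_one _)]

theorem card_coprime_even_to_odd (n : ℕ) :
    Fintype.card {g : Perm (Fin n) // ∀ a : Fin n, Coprime (2 * a + 1 + 1) (2 * g a + 1)} =
      C0 n :=
  Fintype.card_congr <| subtypeEquiv (Equiv.inv _) fun g =>
    g.forall_congr fun a => by
      rw [show 2 * (a : ℕ) + 1 + 1 = 2 * (a + 1) by ring, coprime_comm,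
        coprime_two_mul_iff_of_odd (odd_two_mul_add_one _)]
      simp [Coprime]

theorem stmt_4 (n : ℕ) : C (2 * n) = C0 n ^ 2 := by
  set e := finSumFinInterleave n
  have even_not_coprime : ∀ a b, ¬Coprime ((e (.inr a)).val + 1) ((e (.inr b)).val + 1) :=
    fun a b => not_coprime_of_dvd_of_dvd one_lt_two
      ⟨a + 1, by simp [e, finSumFinInterleave]; ring⟩
      ⟨b + 1, by simp [e, finSumFinInterleave]; ring⟩
  calc C (2 * n) = _ := C_two_mul_eq_card n
    _ = _ := (Fintype.card_congr <| Perm.subtypeCrossSumCongrEquiv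
      (fun x y => Coprime ((e x).val + 1) ((e y).val + 1)) even_not_coprime).symm
    _ = C0 n ^ 2 := by
      rw [Fintype.card_prod, sq]
      exact congrArg₂ (· * ·) (card_coprime_odd_to_even n) (card_coprime_even_to_odd n)
end

section
/- Let C(n) be the number of coprime permutations of {1,…,n} and let C_1(n) be the number of injections f from {1,…,n} into the set {1,3,…,2n+1} of the first n+1 odd positive integers with gcd(i, f(i)) = 1 for each i ∈ [n]. Then C(2n+1) ≤ C_1(n)² for all n ≥ 1. -/
/-- The number of coprime injections from `{1,…,n}` into the first `n+1` odd numbers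
`{1,3,…,2n+1}` (encoded as `j ↦ 2j+1`). -/
noncomputable def C1 (n : ℕ) : ℕ :=
  Fintype.card {f : Fin n ↪ Fin (n + 1) // ∀ i, Nat.gcd (i.val + 1) (2 * (f i).val + 1) = 1}

open Finset

namespace Equiv.Perm

variable {α : Type*} {p : α → Prop}

theorem subsingleton_not_apply_not [Fintype α] [DecidablePred p] (σ : Perm α)
    (hσ : ∀ x, p x → ¬p (σ x))
    (hcard : Fintype.card {x // ¬p x} ≤ Fintype.card {x // p x} + 1) :
    {x | ¬p x ∧ ¬p (σ x)}.Subsingleton := by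
  rintro x ⟨hx, hσx⟩ x' ⟨hx', hσx'⟩
  by_contra hne
  classical
  have hmaps : Set.MapsTo σ ↑(insert x (insert x' ({y | p y} : Finset α)))
      ↑({y | ¬p y} : Finset α) := by
    intro y hy
    simp only [coe_insert, coe_filter, mem_univ, true_and, Set.mem_insert_iff] at hy
    rcases hy with rfl | rfl | hy
    exacts [by simpa using hσx, by simpa using hσx', by simpa using hσ y hy]
  have hle := card_le_card_of_injOn σ hmaps σ.injective.injOn
  rw [card_insert_of_notMem (by simp [hne, hx]), card_insert_of_notMem (by simpa using hx')]
    at hle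
  rw [Fintype.card_subtype, Fintype.card_subtype] at hcard
  omega

theorem eq_of_eqOn_of_inv_eqOn {σ τ : Perm α} (hτ : {x | ¬p x ∧ ¬p (τ x)}.Subsingleton)
    (h : ∀ x, p x → σ x = τ x) (hinv : ∀ y, p y → σ⁻¹ y = τ⁻¹ y) : σ = τ := by
  ext x
  by_cases hx : p x
  · exact h x hx
  by_cases hσx : p (σ x)
  · exact (eq_inv_iff_eq.mp (by simpa using hinv (σ x) hσx)).symm
  by_cases hτx : p (τ x)
  · exact (inv_eq_iff_eq.mp (by simpa using hinv (τ x) hτx)).symm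
  -- Otherwise `x` and `τ⁻¹ (σ x)` are both exceptional points of `τ`.
  set y := τ⁻¹ (σ x)
  have hτy : τ y = σ x := τ.apply_symm_apply (σ x)
  have hy : ¬p y := fun hy => hx (σ.injective (hτy ▸ h y hy) ▸ hy)
  have hxy : x = y := hτ ⟨hx, hτx⟩ ⟨hy, hτy ▸ hσx⟩
  rw [← hτy, ← hxy]

end Equiv.Perm

section

variable {n : ℕ}

def evenNumber (i : Fin n) : Fin (2 * n + 1) :=
  ⟨2 * i.val + 1, by omega⟩

theorem even_evenNumber (i : Fin n) : Even ((evenNumber i).val + 1) :=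
  ⟨i.val + 1, by simp only [evenNumber]; omega⟩

theorem evenNumber_injective : (evenNumber : Fin n → Fin (2 * n + 1)).Injective := fun i i' h => by
  simp only [evenNumber, Fin.mk.injEq] at h
  exact Fin.ext (by omega)

theorem card_odd_le_card_even_add_one :
    Fintype.card {j : Fin (2 * n + 1) // ¬Even (j.val + 1)} ≤
      Fintype.card {j : Fin (2 * n + 1) // Even (j.val + 1)} + 1 := by
  let half (j : {j : Fin (2 * n + 1) // ¬Even (j.val + 1)}) : Fin (n + 1) :=
    ⟨j.1.val / 2, by omega⟩
  have half_inj : half.Injective := by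
    rintro ⟨j, hj⟩ ⟨j', hj'⟩ h
    rw [Subtype.mk.injEq, Fin.ext_iff]
    simp only [half, Nat.even_add_one, not_not, Nat.even_iff, Fin.mk.injEq] at hj hj' h
    omega
  have hodd := Fintype.card_le_of_injective half half_inj
  have heven := Fintype.card_le_of_injective (fun i => ⟨evenNumber i, even_evenNumber i⟩ :
    Fin n → {j : Fin (2 * n + 1) // Even (j.val + 1)})
    fun i i' h => evenNumber_injective (congrArg Subtype.val h)
  simp only [Fintype.card_fin] at hodd heven
  omega

end

def IsCoprimePerm {m : ℕ} (σ : Equiv.Perm (Fin m)) : Prop :=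
  ∀ j, Nat.Coprime (j.val + 1) ((σ j).val + 1)

namespace IsCoprimePerm

variable {m n : ℕ}

theorem inv {σ : Equiv.Perm (Fin m)} (hσ : IsCoprimePerm σ) : IsCoprimePerm σ⁻¹ := fun j => by
  simpa using (hσ (σ⁻¹ j)).symm

theorem not_even_apply {σ : Equiv.Perm (Fin m)} (hσ : IsCoprimePerm σ) {j : Fin m}
    (hj : Even (j.val + 1)) : ¬Even ((σ j).val + 1) := fun h =>
  Nat.not_coprime_of_dvd_of_dvd one_lt_two (even_iff_two_dvd.mp hj) (even_iff_two_dvd.mp h) (hσ j)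

theorem subsingleton_odd_apply_odd {σ : Equiv.Perm (Fin (2 * n + 1))} (hσ : IsCoprimePerm σ) :
    {j | ¬Even (j.val + 1) ∧ ¬Even ((σ j).val + 1)}.Subsingleton :=
  σ.subsingleton_not_apply_not (fun _ => hσ.not_even_apply) card_odd_le_card_even_add_one


/-- In the encoding of `C1`, `halfOnEvens σ i` stands for the image `σ (2 (i + 1))`, which is odd
when `σ` is coprime. -/
def halfOnEvens (σ : Equiv.Perm (Fin (2 * n + 1))) (i : Fin n) : Fin (n + 1) :=
  ⟨(σ (evenNumber i)).val / 2, by have := (σ (evenNumber i)).isLt; omega⟩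

variable {σ τ : Equiv.Perm (Fin (2 * n + 1))}

theorem two_mul_halfOnEvens (hσ : IsCoprimePerm σ) (i : Fin n) :
    2 * (halfOnEvens σ i).val = (σ (evenNumber i)).val := by
  have := hσ.not_even_apply (even_evenNumber i)
  rw [Nat.even_add_one, not_not, Nat.even_iff] at this
  simp only [halfOnEvens]
  omega

theorem halfOnEvens_injective (hσ : IsCoprimePerm σ) : (halfOnEvens σ).Injective := fun i i' h => by
  have := two_mul_halfOnEvens hσ i
  rw [h, two_mul_halfOnEvens hσ i'] at this
  exact evenNumber_injective (σ.injective (Fin.ext this.symm))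

theorem coprime_halfOnEvens (hσ : IsCoprimePerm σ) (i : Fin n) :
    Nat.Coprime (i.val + 1) (2 * (halfOnEvens σ i).val + 1) := by
  rw [two_mul_halfOnEvens hσ]
  exact Nat.Coprime.coprime_mul_left (k := 2) (hσ (evenNumber i))

theorem eqOn_even_of_halfOnEvens_eq (hσ : IsCoprimePerm σ) (hτ : IsCoprimePerm τ)
    (h : halfOnEvens σ = halfOnEvens τ) (j : Fin (2 * n + 1)) (hj : Even (j.val + 1)) :
    σ j = τ j := by
  have hj' : j.val % 2 = 1 := by rwa [Nat.even_add_one, Nat.not_even_iff] at hj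
  have hij : evenNumber ⟨j.val / 2, by omega⟩ = j := Fin.ext (by simp only [evenNumber]; omega)
  have := congrArg (fun f => 2 * (f ⟨j.val / 2, by omega⟩).val) h
  simp only [two_mul_halfOnEvens hσ, two_mul_halfOnEvens hτ, hij] at this
  exact Fin.ext this

theorem eq_of_halfOnEvens_eq (hσ : IsCoprimePerm σ) (hτ : IsCoprimePerm τ)
    (h : halfOnEvens σ = halfOnEvens τ) (hinv : halfOnEvens σ⁻¹ = halfOnEvens τ⁻¹) : σ = τ :=
  Equiv.Perm.eq_of_eqOn_of_inv_eqOn hτ.subsingleton_odd_apply_odd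
    (eqOn_even_of_halfOnEvens_eq hσ hτ h) (eqOn_even_of_halfOnEvens_eq hσ.inv hτ.inv hinv)

def coprimeHalf (hσ : IsCoprimePerm σ) :
    {f : Fin n ↪ Fin (n + 1) // ∀ i, Nat.gcd (i.val + 1) (2 * (f i).val + 1) = 1} :=
  ⟨⟨halfOnEvens σ, halfOnEvens_injective hσ⟩, coprime_halfOnEvens hσ⟩

end IsCoprimePerm

theorem stmt_5_general (n : ℕ) : C (2 * n + 1) ≤ C1 n ^ 2 := by
  rw [sq, C1, ← Fintype.card_prod]
  refine Fintype.card_le_of_injective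
    (fun σ : {σ // IsCoprimePerm σ} => (σ.2.coprimeHalf, σ.2.inv.coprimeHalf)) ?_
  rintro ⟨σ, hσ⟩ ⟨τ, hτ⟩ h
  simp only [IsCoprimePerm.coprimeHalf, Prod.mk.injEq, Subtype.mk.injEq,
    Function.Embedding.mk.injEq] at h
  exact Subtype.ext (IsCoprimePerm.eq_of_halfOnEvens_eq hσ hτ h.1 h.2)

theorem stmt_5 (n : ℕ) (hn : 1 ≤ n) : C (2 * n + 1) ≤ C1 n ^ 2 :=
  stmt_5_general n
end

section
/- Let C(n) be the number of coprime permutations of {1,…,n}. Then C(2n+1) ≥ 2·C(2n−2) for all n ≥ 2. -/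
/-! Every coprime permutation of `[m]`, `m` even, extends to `[m+3]` by either 3-cycle of
`m+1, m+2, m+3`: these are pairwise coprime (consecutive, or both odd and two apart), and the two
3-cycles are exactly the derangements of a three-element set. Distinct pairs give distinct
extensions. -/

namespace CoprimePerm

open Equiv

/-- Coprime permutations of the block `{m+1, …, m+k}`, indexed by `Fin k`. -/
abbrev ShiftedCoprime (m k : ℕ) : Type :=
  {τ : Perm (Fin k) // ∀ i, Nat.Coprime (m + i.val + 1) (m + (τ i).val + 1)}

def blockSum {m k : ℕ} (p : Perm (Fin m) × Perm (Fin k)) : Perm (Fin (m + k)) :=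
  finSumFinEquiv.permCongr (Perm.sumCongrHom _ _ p)

lemma blockSum_injective (m k : ℕ) : Function.Injective (blockSum (m := m) (k := k)) :=
  finSumFinEquiv.permCongr.injective.comp Perm.sumCongrHom_injective

@[simp]
lemma blockSum_castAdd {m k : ℕ} (p : Perm (Fin m) × Perm (Fin k)) (i : Fin m) :
    blockSum p (Fin.castAdd k i) = Fin.castAdd k (p.1 i) := by
  simp [blockSum]

@[simp]
lemma blockSum_natAdd {m k : ℕ} (p : Perm (Fin m) × Perm (Fin k)) (i : Fin k) :
    blockSum p (Fin.natAdd m i) = Fin.natAdd m (p.2 i) := by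
  simp [blockSum]

lemma blockSum_coprime {m k : ℕ} (σ : Perm (Fin m))
    (hσ : ∀ j, Nat.gcd (j.val + 1) ((σ j).val + 1) = 1) (τ : ShiftedCoprime m k)
    (j : Fin (m + k)) :
    Nat.gcd (j.val + 1) ((blockSum (σ, τ.1) j).val + 1) = 1 := by
  induction j using Fin.addCases with
  | left i => simpa using hσ i
  | right i => simpa [add_assoc] using τ.2 i

lemma C_mul_card_shiftedCoprime_le (m k : ℕ) :
    C m * Fintype.card (ShiftedCoprime m k) ≤ C (m + k) := by
  rw [C, C, ← Fintype.card_prod]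
  refine Fintype.card_le_of_injective
    (fun p => ⟨blockSum (p.1.1, p.2.1), blockSum_coprime p.1.1 p.1.2 p.2⟩) ?_
  rintro ⟨⟨σ, _⟩, ⟨τ, _⟩⟩ ⟨⟨σ', _⟩, ⟨τ', _⟩⟩ h
  obtain ⟨rfl, rfl⟩ := Prod.ext_iff.mp (blockSum_injective m k (congrArg Subtype.val h))
  rfl

lemma coprime_of_ne {m : ℕ} (hm : Even m) {i j : Fin 3} (hij : i ≠ j) :
    Nat.Coprime (m + i.val + 1) (m + j.val + 1) := by
  have consecutive (a : ℕ) : Nat.Coprime a (a + 1) :=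
    Nat.coprime_self_add_right.mpr (Nat.coprime_one_right a)
  have h13 : Nat.Coprime (m + 1) (m + 1 + 2) :=
    Nat.coprime_self_add_right.mpr (Nat.coprime_two_right.mpr hm.add_one)
  fin_cases i <;> fin_cases j <;> simp only [ne_eq, not_true_eq_false] at hij <;>
    first
    | exact consecutive _ | exact (consecutive _).symm | exact h13 | exact h13.symm

lemma two_le_card_shiftedCoprime_three {m : ℕ} (hm : Even m) :
    2 ≤ Fintype.card (ShiftedCoprime m 3) := by
  have hder : Fintype.card (derangements (Fin 3)) = 2 := by
    rw [card_derangements_eq_numDerangements, Fintype.card_fin]; rfl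
  rw [← hder]
  exact Fintype.card_le_of_injective
    (fun τ => ⟨τ.1, fun i => coprime_of_ne hm (Ne.symm (τ.2 i))⟩)
    fun _ _ h => Subtype.ext (congrArg (fun τ : ShiftedCoprime m 3 => τ.1) h)

theorem two_mul_C_le_C_add_three {m : ℕ} (hm : Even m) : 2 * C m ≤ C (m + 3) :=
  calc 2 * C m ≤ C m * Fintype.card (ShiftedCoprime m 3) := by
        rw [mul_comm]; exact Nat.mul_le_mul_left _ (two_le_card_shiftedCoprime_three hm)
    _ ≤ C (m + 3) := C_mul_card_shiftedCoprime_le m 3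

end CoprimePerm

theorem stmt_6 (n : ℕ) (hn : 2 ≤ n) : 2 * C (2 * n - 2) ≤ C (2 * n + 1) := by
  have hsum : 2 * n + 1 = (2 * n - 2) + 3 := by omega
  rw [hsum]
  exact CoprimePerm.two_mul_C_le_C_add_three ⟨n - 1, by omega⟩
end

section
/- Let C(n) be the number of coprime permutations of {1,…,n} and C_0(n) the number of coprime bijections from the first n odd positive integers to {1,…,n}. Then for n ≥ 2, C(2n+1) ≥ 2·C_0(n−1)². -/
namespace Stmt7Aux

lemma gcd_succ_self (a : ℕ) : Nat.gcd a (a + 1) = 1 := by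
  have h1 := Nat.gcd_dvd_left a (a + 1)
  have h2 := Nat.gcd_dvd_right a (a + 1)
  have h3 : Nat.gcd a (a + 1) ∣ (a + 1) - a := Nat.dvd_sub h2 h1
  rw [Nat.add_sub_cancel_left] at h3
  exact Nat.dvd_one.mp h3

lemma gcd_odd_add_two (a : ℕ) : Nat.gcd (2 * a + 1) (2 * a + 3) = 1 := by
  have h1 := Nat.gcd_dvd_left (2 * a + 1) (2 * a + 3)
  have h2 := Nat.gcd_dvd_right (2 * a + 1) (2 * a + 3)
  have h3 : Nat.gcd (2 * a + 1) (2 * a + 3) ∣ (2 * a + 3) - (2 * a + 1) :=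
    Nat.dvd_sub h2 h1
  have h4 : Nat.gcd (2 * a + 1) (2 * a + 3) ∣ 2 := by simpa using h3
  rcases (Nat.dvd_prime Nat.prime_two).mp h4 with h | h
  · exact h
  · exfalso
    rw [h] at h1
    obtain ⟨k, hk⟩ := h1
    omega

variable {m : ℕ}

/-- The underlying function of the extended permutation. -/
def bigFun (f g : Equiv.Perm (Fin m)) (b : Bool) (j : Fin (2 * m + 3)) : Fin (2 * m + 3) :=
  if h : j.val < 2 * m then
    if j.val % 2 = 0 then
      ⟨2 * (f ⟨j.val / 2, by omega⟩).val + 1, by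
        have := (f ⟨j.val / 2, by omega⟩).isLt; omega⟩
    else
      ⟨2 * (g.symm ⟨j.val / 2, by omega⟩).val, by
        have := (g.symm ⟨j.val / 2, by omega⟩).isLt; omega⟩
  else
    if b then
      if j.val = 2 * m then ⟨2 * m + 1, by omega⟩
      else if j.val = 2 * m + 1 then ⟨2 * m + 2, by omega⟩
      else ⟨2 * m, by omega⟩
    else
      if j.val = 2 * m then ⟨2 * m + 2, by omega⟩
      else if j.val = 2 * m + 1 then ⟨2 * m, by omega⟩
      else ⟨2 * m + 1, by omega⟩

lemma bigFun_even (f g : Equiv.Perm (Fin m)) (b : Bool) (i : Fin m) :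
    (bigFun f g b ⟨2 * i.val, by omega⟩).val = 2 * (f i).val + 1 := by
  have hi := i.isLt
  unfold bigFun
  rw [dif_pos (show ((⟨2 * i.val, by omega⟩ : Fin (2 * m + 3)).val) < 2 * m from by
    show 2 * i.val < 2 * m; omega)]
  rw [if_pos (show ((⟨2 * i.val, by omega⟩ : Fin (2 * m + 3)).val) % 2 = 0 from by
    show (2 * i.val) % 2 = 0; omega)]
  have harg : (⟨(⟨2 * i.val, by omega⟩ : Fin (2 * m + 3)).val / 2, by
      show 2 * i.val / 2 < m; omega⟩ : Fin m) = i := by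
    apply Fin.ext
    show 2 * i.val / 2 = i.val
    omega
  simp only [harg]

lemma bigFun_odd (f g : Equiv.Perm (Fin m)) (b : Bool) (k : Fin m) :
    (bigFun f g b ⟨2 * k.val + 1, by omega⟩).val = 2 * (g.symm k).val := by
  have hk := k.isLt
  unfold bigFun
  rw [dif_pos (show ((⟨2 * k.val + 1, by omega⟩ : Fin (2 * m + 3)).val) < 2 * m from by
    show 2 * k.val + 1 < 2 * m; omega)]
  rw [if_neg (show ¬ ((⟨2 * k.val + 1, by omega⟩ : Fin (2 * m + 3)).val) % 2 = 0 from by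
    show ¬ (2 * k.val + 1) % 2 = 0; omega)]
  have harg : (⟨(⟨2 * k.val + 1, by omega⟩ : Fin (2 * m + 3)).val / 2, by
      show (2 * k.val + 1) / 2 < m; omega⟩ : Fin m) = k := by
    apply Fin.ext
    show (2 * k.val + 1) / 2 = k.val
    omega
  simp only [harg]

lemma bigFun_inj (f g : Equiv.Perm (Fin m)) (b : Bool) :
    Function.Injective (bigFun f g b) := by
  intro j1 j2 hj
  unfold bigFun at hj
  ext
  by_cases h1 : j1.val < 2 * m <;> by_cases h2 : j2.val < 2 * m
  · rw [dif_pos h1, dif_pos h2] at hj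
    by_cases p1 : j1.val % 2 = 0 <;> by_cases p2 : j2.val % 2 = 0
    · rw [if_pos p1, if_pos p2] at hj
      have := congrArg Fin.val hj
      simp only at this
      have hf : f ⟨j1.val / 2, by omega⟩ = f ⟨j2.val / 2, by omega⟩ := by
        apply Fin.ext
        omega
      have := f.injective hf
      have := congrArg Fin.val this
      simp only at this
      omega
    · rw [if_pos p1, if_neg p2] at hj
      have := congrArg Fin.val hj
      simp only at this; omega
    · rw [if_neg p1, if_pos p2] at hj
      have := congrArg Fin.val hj
      simp only at this; omega
    · rw [if_neg p1, if_neg p2] at hj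
      have := congrArg Fin.val hj
      simp only at this
      have hg : g.symm ⟨j1.val / 2, by omega⟩ = g.symm ⟨j2.val / 2, by omega⟩ := by
        apply Fin.ext
        omega
      have := g.symm.injective hg
      have := congrArg Fin.val this
      simp only at this
      omega
  · rw [dif_pos h1, dif_neg h2] at hj
    have := congrArg Fin.val hj
    exfalso
    by_cases p1 : j1.val % 2 = 0
    · rw [if_pos p1] at this
      have hb := (f ⟨j1.val / 2, by omega⟩).isLt
      cases b <;> simp only [if_true, if_false, Bool.false_eq_true] at this <;>
        split_ifs at this <;> simp at this <;> omega
    · rw [if_neg p1] at this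
      have hb := (g.symm ⟨j1.val / 2, by omega⟩).isLt
      cases b <;> simp only [if_true, if_false, Bool.false_eq_true] at this <;>
        split_ifs at this <;> simp at this <;> omega
  · rw [dif_neg h1, dif_pos h2] at hj
    have := congrArg Fin.val hj
    exfalso
    by_cases p2 : j2.val % 2 = 0
    · rw [if_pos p2] at this
      have hb := (f ⟨j2.val / 2, by omega⟩).isLt
      cases b <;> simp only [if_true, if_false, Bool.false_eq_true] at this <;>
        split_ifs at this <;> simp at this <;> omega
    · rw [if_neg p2] at this
      have hb := (g.symm ⟨j2.val / 2, by omega⟩).isLt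
      cases b <;> simp only [if_true, if_false, Bool.false_eq_true] at this <;>
        split_ifs at this <;> simp at this <;> omega
  · have hj1 := j1.isLt
    have hj2 := j2.isLt
    rw [dif_neg h1, dif_neg h2] at hj
    have := congrArg Fin.val hj
    cases b <;> simp only [if_true, if_false, Bool.false_eq_true] at this <;>
      split_ifs at this <;> simp at this <;> omega

/-- The extended permutation. -/
noncomputable def bigPerm (f g : Equiv.Perm (Fin m)) (b : Bool) :
    Equiv.Perm (Fin (2 * m + 3)) :=
  Equiv.ofBijective (bigFun f g b) ((Finite.injective_iff_bijective).mp (bigFun_inj f g b))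

lemma bigPerm_apply (f g : Equiv.Perm (Fin m)) (b : Bool) (j : Fin (2 * m + 3)) :
    bigPerm f g b j = bigFun f g b j := rfl

lemma bigPerm_coprime
    (f g : Equiv.Perm (Fin m))
    (hf : ∀ i, Nat.gcd (2 * i.val + 1) ((f i).val + 1) = 1)
    (hg : ∀ i, Nat.gcd (2 * i.val + 1) ((g i).val + 1) = 1)
    (b : Bool) (j : Fin (2 * m + 3)) :
    Nat.gcd (j.val + 1) ((bigPerm f g b j).val + 1) = 1 := by
  rw [bigPerm_apply]
  unfold bigFun
  by_cases h : j.val < 2 * m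
  · rw [dif_pos h]
    by_cases p : j.val % 2 = 0
    · rw [if_pos p]
      simp only
      have hji : j.val = 2 * ((⟨j.val / 2, by omega⟩ : Fin m)).val := by simp; omega
      set i : Fin m := ⟨j.val / 2, by omega⟩
      have h1 : Nat.Coprime (2 * i.val + 1) ((f i).val + 1) := hf i
      have h2 : Nat.Coprime (2 * i.val + 1) 2 := by simp [Nat.coprime_two_right]
      have h3 : Nat.Coprime (2 * i.val + 1) (2 * ((f i).val + 1)) := h2.mul_right h1
      have e : 2 * ((f i).val + 1) = 2 * (f i).val + 1 + 1 := by ring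
      rw [e] at h3
      rw [hji]
      exact h3
    · rw [if_neg p]
      simp only
      have hjk : j.val = 2 * ((⟨j.val / 2, by omega⟩ : Fin m)).val + 1 := by simp; omega
      set k : Fin m := ⟨j.val / 2, by omega⟩
      set i : Fin m := g.symm k with hi
      have hgi : g i = k := by simp [hi]
      have h1 : Nat.Coprime (2 * i.val + 1) (k.val + 1) := by
        have := hg i; rwa [hgi] at this
      have h2 : Nat.Coprime (2 * i.val + 1) 2 := by simp [Nat.coprime_two_right]
      have h3 : Nat.Coprime (2 * i.val + 1) (2 * (k.val + 1)) := h2.mul_right h1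
      have h4 : Nat.Coprime (2 * (k.val + 1)) (2 * i.val + 1) := h3.symm
      have e : j.val + 1 = 2 * (k.val + 1) := by omega
      rw [e]
      exact h4
  · rw [dif_neg h]
    have hj := j.isLt
    have c1 : Nat.gcd (2 * m + 1) (2 * m + 2) = 1 := gcd_succ_self _
    have c2 : Nat.gcd (2 * m + 2) (2 * m + 3) = 1 := gcd_succ_self _
    have c3 : Nat.gcd (2 * m + 1) (2 * m + 3) = 1 := gcd_odd_add_two m
    have c1' : Nat.gcd (2 * m + 2) (2 * m + 1) = 1 := by rw [Nat.gcd_comm]; exact c1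
    have c2' : Nat.gcd (2 * m + 3) (2 * m + 2) = 1 := by rw [Nat.gcd_comm]; exact c2
    have c3' : Nat.gcd (2 * m + 3) (2 * m + 1) = 1 := by rw [Nat.gcd_comm]; exact c3
    have hcases : j.val = 2 * m ∨ j.val = 2 * m + 1 ∨ j.val = 2 * m + 2 := by omega
    cases b <;> rcases hcases with hc | hc | hc <;>
      simp only [if_true, if_false, Bool.false_eq_true, hc] <;> simp_all
end Stmt7Aux

open Stmt7Aux in
theorem stmt_7 (n : ℕ) (hn : 2 ≤ n) : 2 * C0 (n - 1) ^ 2 ≤ C (2 * n + 1) := by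
  obtain ⟨m, rfl⟩ : ∃ m, n = m + 1 := ⟨n - 1, by omega⟩
  have hN : 2 * (m + 1) + 1 = 2 * m + 3 := by ring
  rw [hN, show m + 1 - 1 = m from rfl]
  unfold C C0
  set A := {f : Equiv.Perm (Fin m) // ∀ i, Nat.gcd (2 * i.val + 1) ((f i).val + 1) = 1}
  set B := {σ : Equiv.Perm (Fin (2 * m + 3)) //
      ∀ j, Nat.gcd (j.val + 1) ((σ j).val + 1) = 1}
  have key : Function.Injective (fun p : Bool × A × A =>
      (⟨bigPerm p.2.1.val p.2.2.val p.1,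
        bigPerm_coprime _ _ p.2.1.prop p.2.2.prop p.1⟩ : B)) := by
    rintro ⟨b1, ⟨f1, hf1⟩, ⟨g1, hg1⟩⟩ ⟨b2, ⟨f2, hf2⟩, ⟨g2, hg2⟩⟩ h
    simp only [Subtype.mk.injEq] at h
    have happ : ∀ j, bigFun f1 g1 b1 j = bigFun f2 g2 b2 j := by
      intro j
      have := congrArg (fun σ : Equiv.Perm (Fin (2 * m + 3)) => σ j) h
      simpa [bigPerm_apply] using this
    have hfeq : f1 = f2 := by
      ext i
      have := congrArg Fin.val (happ ⟨2 * i.val, by omega⟩)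
      rw [bigFun_even, bigFun_even] at this
      omega
    have hgeq : g1 = g2 := by
      have hsymm : g1.symm = g2.symm := by
        ext k
        have := congrArg Fin.val (happ ⟨2 * k.val + 1, by omega⟩)
        rw [bigFun_odd, bigFun_odd] at this
        omega
      calc g1 = g1.symm.symm := by simp
        _ = g2.symm.symm := by rw [hsymm]
        _ = g2 := by simp
    have hbeq : b1 = b2 := by
      have := congrArg Fin.val (happ ⟨2 * m, by omega⟩)
      unfold bigFun at this
      rw [dif_neg (show ¬ ((⟨2 * m, by omega⟩ : Fin (2 * m + 3)).val < 2 * m) by simp),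
        dif_neg (show ¬ ((⟨2 * m, by omega⟩ : Fin (2 * m + 3)).val < 2 * m) by simp)] at this
      cases b1 <;> cases b2 <;> simp_all
    simp [hfeq, hgeq, hbeq]
  have hcard := Fintype.card_le_of_injective _ key
  simpa [Fintype.card_prod, Fintype.card_bool, sq, mul_assoc] using hcard
end

section
/- C(2n) ≤ (n!)² and C(2n+1) ≤ ((n+1)!)², where C(m) is the number of coprime permutations of {1,…,m}. -/
namespace StmtAux

lemma parity_of_gcd {a b : ℕ} (h : Nat.gcd (a + 1) (b + 1) = 1) (ha : a % 2 = 1) :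
    b % 2 = 0 := by
  by_contra hb
  have h2 : (2 : ℕ) ∣ a + 1 := by omega
  have h3 : (2 : ℕ) ∣ b + 1 := by omega
  have := Nat.dvd_gcd h2 h3
  omega

lemma card_filter_range (m : ℕ) :
    ((Finset.range m).filter (fun x => x % 2 = 1)).card = m / 2 ∧
    ((Finset.range m).filter (fun x => x % 2 = 0)).card = (m + 1) / 2 := by
  induction m with
  | zero => simp
  | succ m ih =>
    obtain ⟨ih1, ih2⟩ := ih
    rw [Finset.range_add_one, Finset.filter_insert, Finset.filter_insert]
    rcases Nat.mod_two_eq_zero_or_one m with h0 | h1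
    · rw [if_neg (by omega), if_pos h0, Finset.card_insert_of_notMem (by simp)]
      constructor <;> omega
    · rw [if_pos h1, if_neg (by omega), Finset.card_insert_of_notMem (by simp)]
      constructor <;> omega

lemma card_filter_fin_odd (m : ℕ) :
    (Finset.univ.filter (fun j : Fin m => j.val % 2 = 1)).card = m / 2 := by
  have : (Finset.univ.filter (fun j : Fin m => j.val % 2 = 1)).card
      = ((Finset.range m).filter (fun x => x % 2 = 1)).card := by
    apply Finset.card_bij (fun j _ => j.val)
    · intro a ha
      simp only [Finset.mem_filter, Finset.mem_univ, true_and] at ha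
      simp only [Finset.mem_filter, Finset.mem_range]
      exact ⟨a.isLt, ha⟩
    · intro a _ b _ h; exact Fin.ext h
    · intro b hb
      simp only [Finset.mem_filter, Finset.mem_range] at hb
      refine ⟨⟨b, hb.1⟩, ?_, rfl⟩
      simp [hb.2]
  rw [this, (card_filter_range m).1]

lemma card_filter_fin_even (m : ℕ) :
    (Finset.univ.filter (fun j : Fin m => j.val % 2 = 0)).card = (m + 1) / 2 := by
  have : (Finset.univ.filter (fun j : Fin m => j.val % 2 = 0)).card
      = ((Finset.range m).filter (fun x => x % 2 = 0)).card := by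
    apply Finset.card_bij (fun j _ => j.val)
    · intro a ha
      simp only [Finset.mem_filter, Finset.mem_univ, true_and] at ha
      simp only [Finset.mem_filter, Finset.mem_range]
      exact ⟨a.isLt, ha⟩
    · intro a _ b _ h; exact Fin.ext h
    · intro b hb
      simp only [Finset.mem_filter, Finset.mem_range] at hb
      refine ⟨⟨b, hb.1⟩, ?_, rfl⟩
      simp [hb.2]
  rw [this, (card_filter_range m).2]

abbrev Ev (m : ℕ) := {j : Fin m // j.val % 2 = 1}
abbrev Od (m : ℕ) := {j : Fin m // j.val % 2 = 0}

lemma card_Ev (m : ℕ) : Fintype.card (Ev m) = m / 2 := by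
  rw [Fintype.card_subtype]; exact card_filter_fin_odd m

lemma card_Od (m : ℕ) : Fintype.card (Od m) = (m + 1) / 2 := by
  rw [Fintype.card_subtype]; exact card_filter_fin_even m

lemma C_le (m : ℕ) : C m ≤ (((m + 1) / 2).descFactorial (m / 2)) ^ 2 := by
  classical
  -- the injection
  have key : C m ≤ Fintype.card ((Ev m ↪ Od m) × (Ev m ↪ Od m)) := by
    apply Fintype.card_le_of_injective
      (fun σ => (⟨fun e => ⟨σ.1 e.1, parity_of_gcd (σ.2 e.1) e.2⟩, by
          intro a b hab
          simp only [Subtype.mk.injEq] at hab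
          exact Subtype.ext (σ.1.injective hab)⟩,
        ⟨fun e => ⟨σ.1.symm e.1, by
            have h := σ.2 (σ.1.symm e.1)
            rw [Equiv.apply_symm_apply] at h
            exact parity_of_gcd (Nat.coprime_comm.mp h) e.2⟩, by
          intro a b hab
          simp only [Subtype.mk.injEq] at hab
          exact Subtype.ext (σ.1.symm.injective hab)⟩))
    intro ⟨σ, hσ⟩ ⟨τ, hτ⟩ h
    simp only [Prod.mk.injEq] at h
    have h1 : ∀ e : Fin m, e.val % 2 = 1 → σ e = τ e := by
      intro e he
      have := DFunLike.congr_fun h.1 ⟨e, he⟩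
      exact congrArg Subtype.val this
    have h2 : ∀ e : Fin m, e.val % 2 = 1 → σ.symm e = τ.symm e := by
      intro e he
      have := DFunLike.congr_fun h.2 ⟨e, he⟩
      exact congrArg Subtype.val this
    apply Subtype.ext
    apply Equiv.ext
    intro j
    by_cases hj : j.val % 2 = 1
    · exact h1 j hj
    · by_cases hsj : (σ j).val % 2 = 1
      · have := h2 (σ j) hsj
        rw [Equiv.symm_apply_apply] at this
        have : τ (σ.symm (σ j)) = σ j := by
          rw [Equiv.symm_apply_apply]
          conv_lhs => rw [this]
          exact τ.apply_symm_apply _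
        rw [Equiv.symm_apply_apply] at this
        exact this.symm
      · by_cases htj : (τ j).val % 2 = 1
        · have := (h2 (τ j) htj).symm
          rw [Equiv.symm_apply_apply] at this
          have : σ (τ.symm (τ j)) = τ j := by
            rw [Equiv.symm_apply_apply]
            conv_lhs => rw [this]
            exact σ.apply_symm_apply _
          rw [Equiv.symm_apply_apply] at this
          exact this
        · -- both images even-indexed; counting argument
          set O : Finset (Fin m) := Finset.univ.filter (fun x => x.val % 2 = 0) with hO
          set E : Finset (Fin m) := Finset.univ.filter (fun x => x.val % 2 = 1) with hE
          have himg_sub : E.image σ ⊆ O := by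
            intro x hx
            simp only [hE, hO, Finset.mem_image, Finset.mem_filter, Finset.mem_univ,
              true_and] at hx ⊢
            obtain ⟨e, he, rfl⟩ := hx
            exact parity_of_gcd (hσ e) he
          have hcard_img : (E.image σ).card = E.card :=
            Finset.card_image_of_injective _ σ.injective
          have hcardS : (O \ E.image σ).card ≤ 1 := by
            rw [Finset.card_sdiff_of_subset himg_sub, hcard_img]
            have hOc : O.card = (m + 1) / 2 := card_filter_fin_even m
            have hEc : E.card = m / 2 := card_filter_fin_odd m
            omega
          have himg_eq : E.image σ = E.image τ := by
            apply Finset.image_congr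
            intro e he
            simp only [hE, Finset.mem_coe, Finset.mem_filter] at he
            exact h1 e he.2
          have hmem1 : σ j ∈ O \ E.image σ := by
            simp only [hO, hE, Finset.mem_sdiff, Finset.mem_filter, Finset.mem_univ,
              true_and, Finset.mem_image]
            refine ⟨by omega, ?_⟩
            rintro ⟨e, he, heq⟩
            exact hj (by rw [← σ.injective heq]; exact he)
          have hmem2 : τ j ∈ O \ E.image σ := by
            rw [himg_eq]
            simp only [hO, hE, Finset.mem_sdiff, Finset.mem_filter, Finset.mem_univ,
              true_and, Finset.mem_image]
            refine ⟨by omega, ?_⟩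
            rintro ⟨e, he, heq⟩
            exact hj (by rw [← τ.injective heq]; exact he)
          exact Finset.card_le_one.mp hcardS _ hmem1 _ hmem2
  calc C m ≤ Fintype.card ((Ev m ↪ Od m) × (Ev m ↪ Od m)) := key
    _ = (((m + 1) / 2).descFactorial (m / 2)) ^ 2 := by
        rw [Fintype.card_prod, Fintype.card_embedding_eq, card_Ev, card_Od, sq]

lemma descFactorial_succ_self (n : ℕ) : (n + 1).descFactorial n = (n + 1).factorial := by
  induction n with
  | zero => rfl
  | succ n ih =>
    rw [Nat.succ_descFactorial_succ, ih]
    simp [Nat.factorial_succ]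

end StmtAux

theorem stmt_8 (n : ℕ) :
    C (2 * n) ≤ n.factorial ^ 2 ∧ C (2 * n + 1) ≤ (n + 1).factorial ^ 2 := by
  constructor
  · have h := StmtAux.C_le (2 * n)
    have h1 : (2 * n + 1) / 2 = n := by omega
    have h2 : 2 * n / 2 = n := by omega
    rw [h1, h2, Nat.descFactorial_self] at h
    exact h
  · have h := StmtAux.C_le (2 * n + 1)
    have h1 : (2 * n + 1 + 1) / 2 = n + 1 := by omega
    have h2 : (2 * n + 1) / 2 = n := by omega
    rw [h1, h2, StmtAux.descFactorial_succ_self] at h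
    exact h
end

section
/- There exists N such that for all n ≥ N, Σ_{m < 2n, m odd} (m/φ(m))² < 1.78·n. -/
/-!
Since `m / φ(m) = ∏_{p ∣ m} p / (p - 1)`, we have `(m / φ(m))² = ∏_{p ∣ m} (1 + h(p)) =
∑_{d ∣ m squarefree} h(d)` with `h(p) = (2p - 1) / (p - 1)²`. Swapping the sums, the odd `m < 2n`
contribute at most `∑_d h(d) (n / d + 1)` over odd squarefree `d < 2n`.

The main part is at most `n ∏_{p odd} (1 + h(p) / p)`: the factors with `p < 300` are multiplied
out (`≤ 1.7707`), and beyond 300 the bound `h(k) / k ≤ 1 / (k - 2) - 1 / k` telescopes, costing a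
factor `≤ 299 / 298`. For the remainder, `h(d)² d ≤ 30375 / 4096 < 9` on odd squarefree `d`, so it
is at most `3 ∑_{d < 2n} d^{-1/2} ≤ 6 √(2n) = o(n)`.
-/

namespace OddTotientSquares

open Finset Real
open scoped Nat

noncomputable def primeWeight (p : ℕ) : ℝ := (2 * p - 1) / ((p : ℝ) - 1) ^ 2

/-- The paper's `h(d)` for squarefree `d`, the only arguments that occur. -/
noncomputable def weight (d : ℕ) : ℝ := ∏ p ∈ d.primeFactors, primeWeight p

lemma primeWeight_nonneg {p : ℕ} (hp : 0 < p) : 0 ≤ primeWeight p := by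
  have : (1 : ℝ) ≤ p := by exact_mod_cast hp
  exact div_nonneg (by linarith) (sq_nonneg _)

lemma primeWeight_div_nonneg (k : ℕ) : 0 ≤ primeWeight k / k := by
  rcases k.eq_zero_or_pos with rfl | hk
  · simp
  · exact div_nonneg (primeWeight_nonneg hk) k.cast_nonneg

lemma weight_nonneg (d : ℕ) : 0 ≤ weight d :=
  prod_nonneg fun _ hp => primeWeight_nonneg (Nat.pos_of_mem_primeFactors hp)

theorem _root_.Nat.prod_primeFactors_one_add {R : Type*} [CommSemiring R] {m : ℕ} (hm : m ≠ 0)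
    (f : ℕ → R) :
    ∏ p ∈ m.primeFactors, (1 + f p) =
      ∑ d ∈ m.divisors with Squarefree d, ∏ p ∈ d.primeFactors, f p := by
  rw [prod_one_add, Nat.sum_divisors_filter_squarefree hm, Nat.factors_eq]
  refine sum_congr rfl fun t ht => ?_
  rw [prod_val]
  exact congrArg (·.prod f) (Nat.primeFactors_prod fun p hp =>
    Nat.prime_of_mem_primeFactors (mem_powerset.mp ht hp)).symm

lemma div_totient_eq_prod {m : ℕ} (hm : m ≠ 0) :
    (m : ℝ) / φ m = ∏ p ∈ m.primeFactors, (1 - (p : ℝ)⁻¹)⁻¹ := by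
  have h : (φ m : ℝ) = m * ∏ p ∈ m.primeFactors, (1 - (p : ℝ)⁻¹) := by
    have := congrArg (Rat.cast (K := ℝ)) (Nat.totient_eq_mul_prod_factors m)
    push_cast at this
    exact this
  rw [h, div_mul_cancel_left₀ (by exact_mod_cast hm), prod_inv_distrib]

lemma one_sub_inv_inv_sq {p : ℕ} (hp : p.Prime) : ((1 - (p : ℝ)⁻¹)⁻¹) ^ 2 = 1 + primeWeight p := by
  have : (p : ℝ) - 1 ≠ 0 := sub_ne_zero.mpr (by exact_mod_cast hp.one_lt.ne')
  have : (p : ℝ) ≠ 0 := by exact_mod_cast hp.ne_zero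
  unfold primeWeight
  field_simp
  ring

lemma sq_div_totient_eq_sum_weight {m : ℕ} (hm : m ≠ 0) :
    ((m : ℝ) / φ m) ^ 2 = ∑ d ∈ m.divisors with Squarefree d, weight d := by
  rw [div_totient_eq_prod hm, ← prod_pow,
    prod_congr rfl fun p hp => one_sub_inv_inv_sq (Nat.prime_of_mem_primeFactors hp)]
  exact Nat.prod_primeFactors_one_add hm _

lemma sum_sq_div_totient_eq_sum_card_mul_weight {M D : Finset ℕ} (hM : 0 ∉ M)
    (hD : ∀ d ∈ D, Squarefree d) (hMD : ∀ m ∈ M, ∀ d ∈ m.divisors, Squarefree d → d ∈ D) :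
    ∑ m ∈ M, ((m : ℝ) / φ m) ^ 2 = ∑ d ∈ D, #{m ∈ M | d ∣ m} * weight d := by
  have hm0 : ∀ m ∈ M, m ≠ 0 := fun m hm h => hM (h ▸ hm)
  rw [sum_congr rfl fun m hm => sq_div_totient_eq_sum_weight (hm0 m hm)]
  simp_rw [← nsmul_eq_mul, ← sum_const]
  refine sum_comm' fun m d => ?_
  simp only [mem_filter, Nat.mem_divisors]
  exact ⟨fun ⟨hm, ⟨hdm, _⟩, hd⟩ =>
      ⟨⟨hm, hdm⟩, hMD m hm d (Nat.mem_divisors.mpr ⟨hdm, hm0 m hm⟩) hd⟩,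
    fun ⟨⟨hm, hdm⟩, hd⟩ => ⟨hm, ⟨hdm, hm0 m hm⟩, hD d hd⟩⟩

lemma card_odd_multiples_le {d : ℕ} (hd : Odd d) (n : ℕ) :
    #{m ∈ range (2 * n) | Odd m ∧ d ∣ m} ≤ n / d + 1 := by
  calc #{m ∈ range (2 * n) | Odd m ∧ d ∣ m}
      ≤ #((range (n / d + 1)).image fun j => d * (2 * j + 1)) := by
        refine card_le_card fun m hm => ?_
        simp only [mem_filter, mem_range, mem_image] at hm ⊢
        obtain ⟨hm2n, hodd, k, rfl⟩ := hm
        obtain ⟨j, rfl⟩ := Nat.Odd.of_mul_right hodd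
        refine ⟨j, Nat.lt_succ_of_le ((Nat.le_div_iff_mul_le hd.pos).mpr ?_), by ring⟩
        nlinarith
    _ ≤ n / d + 1 := card_image_le.trans (card_range _).le

lemma sum_prod_primeFactors_le_prod_one_add {R : Type*} [CommSemiring R] [PartialOrder R]
    [IsOrderedRing R] {D P : Finset ℕ} {f : ℕ → R} (hD : ∀ d ∈ D, Squarefree d)
    (hDP : ∀ d ∈ D, d.primeFactors ⊆ P) (hf : ∀ p ∈ P, 0 ≤ f p) :
    ∑ d ∈ D, ∏ p ∈ d.primeFactors, f p ≤ ∏ p ∈ P, (1 + f p) := by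
  have hinj : Set.InjOn Nat.primeFactors D := fun d hd e he hde => by
    rw [← Nat.prod_primeFactors_of_squarefree (hD d hd),
      ← Nat.prod_primeFactors_of_squarefree (hD e he), hde]
  rw [prod_one_add, ← sum_image (g := Nat.primeFactors) (f := fun t => ∏ p ∈ t, f p) hinj]
  refine sum_le_sum_of_subset_of_nonneg ?_ fun t ht _ => prod_nonneg fun p hp => hf p ?_
  · intro t ht
    obtain ⟨d, hd, rfl⟩ := mem_image.mp ht
    exact mem_powerset.mpr (hDP d hd)
  · exact mem_powerset.mp ht hp

set_option maxRecDepth 20000 in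
lemma prod_odd_primes_lt_300_le :
    ∏ p ∈ range 300 with p.Prime ∧ Odd p, (1 + primeWeight p / p) ≤ 1.7707 := by
  simp only [prod_filter, prod_range_succ, prod_range_zero]
  norm_num [primeWeight, Nat.odd_iff]

lemma primeWeight_div_le {j : ℕ} (hj : 1 ≤ j) :
    primeWeight (2 * j + 1) / (2 * j + 1 : ℕ) ≤ 1 / (2 * j - 1) - 1 / (2 * (j + 1 : ℕ) - 1) := by
  have : (1 : ℝ) ≤ j := by exact_mod_cast hj
  have h1 : ((2 * j + 1 : ℕ) : ℝ) - 1 = 2 * j := by push_cast; ring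
  unfold primeWeight
  rw [h1]
  push_cast
  rw [div_div, div_sub_div _ _ (by linarith) (by linarith),
    div_le_div_iff₀ (by positivity) (by nlinarith)]
  nlinarith

lemma sum_Ico_one_div_two_mul_sub_one_sub_le {a : ℕ} (ha : 1 ≤ a) (b : ℕ) :
    ∑ j ∈ Ico a b, (1 / (2 * j - 1) - 1 / (2 * (j + 1 : ℕ) - 1) : ℝ) ≤ 1 / (2 * a - 1) := by
  set t : ℕ → ℝ := fun i => 1 / (2 * i - 1)
  have ht : ∀ i, 1 ≤ i → 0 ≤ t i := fun i hi => by
    have : (1 : ℝ) ≤ i := by exact_mod_cast hi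
    exact div_nonneg zero_le_one (by linarith)
  rcases le_or_gt a b with hab | hab
  · have := sum_Ico_sub (fun i => -t i) hab
    simp only [neg_sub_neg] at this
    rw [this]
    linarith [ht b (ha.trans hab)]
  · rw [Ico_eq_empty_of_le hab.le, sum_empty]
    exact ht a ha

lemma sum_primeWeight_div_tail_le (X : ℕ) :
    ∑ p ∈ Ico 300 X with p.Prime ∧ Odd p, primeWeight p / p ≤ 1 / 299 := by
  calc ∑ p ∈ Ico 300 X with p.Prime ∧ Odd p, primeWeight p / p
      ≤ ∑ k ∈ (Ico 150 X).image (fun j => 2 * j + 1), primeWeight k / k := by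
        refine sum_le_sum_of_subset_of_nonneg (fun k hk => ?_) fun k _ _ => primeWeight_div_nonneg k
        simp only [mem_filter, mem_Ico, mem_image] at hk ⊢
        obtain ⟨⟨h300, hX⟩, -, j, rfl⟩ := hk
        exact ⟨j, ⟨by omega, by omega⟩, rfl⟩
    _ = ∑ j ∈ Ico 150 X, primeWeight (2 * j + 1) / (2 * j + 1 : ℕ) :=
        sum_image fun i _ j _ h => by omega
    _ ≤ ∑ j ∈ Ico 150 X, (1 / (2 * j - 1) - 1 / (2 * (j + 1 : ℕ) - 1) : ℝ) :=
        sum_le_sum fun j hj => primeWeight_div_le (by simp only [mem_Ico] at hj; omega)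
    _ ≤ 1 / 299 := by
        convert sum_Ico_one_div_two_mul_sub_one_sub_le (by norm_num : 1 ≤ 150) X using 1
        norm_num

lemma prod_one_add_primeWeight_div_le {X : ℕ} (hX : 300 ≤ X) :
    ∏ p ∈ range X with p.Prime ∧ Odd p, (1 + primeWeight p / p) ≤ 1.777 := by
  rw [prod_filter, ← prod_range_mul_prod_Ico _ hX, ← prod_filter, ← prod_filter]
  have htail : ∏ p ∈ Ico 300 X with p.Prime ∧ Odd p, (1 + primeWeight p / p) ≤ 299 / 298 :=
    calc _ ≤ exp (∑ p ∈ Ico 300 X with p.Prime ∧ Odd p, primeWeight p / p) :=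
          prod_one_add_le_exp_sum _ primeWeight_div_nonneg
      _ ≤ exp (1 / 299) := exp_le_exp.mpr (sum_primeWeight_div_tail_le X)
      _ ≤ 1 / (1 - 1 / 299) := exp_bound_div_one_sub_of_interval (by norm_num) (by norm_num)
      _ = 299 / 298 := by norm_num
  calc _ ≤ 1.7707 * (299 / 298 : ℝ) :=
        mul_le_mul prod_odd_primes_lt_300_le htail
          (prod_nonneg fun p _ => add_nonneg zero_le_one (primeWeight_div_nonneg p)) (by norm_num)
    _ ≤ 1.777 := by norm_num

lemma cast_eq_prod_primeFactors_of_squarefree {d : ℕ} (hd : Squarefree d) :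
    (d : ℝ) = ∏ p ∈ d.primeFactors, (p : ℝ) := by
  rw [← Nat.cast_prod, Nat.prod_primeFactors_of_squarefree hd]

lemma sum_weight_div_le {n : ℕ} (hn : 150 ≤ n) :
    ∑ d ∈ range (2 * n) with Squarefree d ∧ Odd d, weight d / d ≤ 1.777 := by
  calc _ = ∑ d ∈ range (2 * n) with Squarefree d ∧ Odd d,
        ∏ p ∈ d.primeFactors, primeWeight p / p := sum_congr rfl fun d hd => by
          rw [weight, cast_eq_prod_primeFactors_of_squarefree (mem_filter.mp hd).2.1,
            prod_div_distrib]
    _ ≤ ∏ p ∈ range (2 * n) with p.Prime ∧ Odd p, (1 + primeWeight p / p) := by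
        refine sum_prod_primeFactors_le_prod_one_add (fun d hd => (mem_filter.mp hd).2.1)
          (fun d hd p hp => ?_) fun p _ => primeWeight_div_nonneg p
        obtain ⟨hd2n, -, hodd⟩ := by simpa only [mem_filter, mem_range] using hd
        have hpd := Nat.dvd_of_mem_primeFactors hp
        simp only [mem_filter, mem_range]
        exact ⟨(Nat.le_of_dvd hodd.pos hpd).trans_lt hd2n, Nat.prime_of_mem_primeFactors hp,
          hodd.of_dvd_nat hpd⟩
    _ ≤ 1.777 := prod_one_add_primeWeight_div_le (by omega)

lemma primeWeight_sq_mul_le_one {p : ℕ} (hp : 7 ≤ p) : primeWeight p ^ 2 * p ≤ 1 := by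
  have h7 : (7 : ℝ) ≤ p := by exact_mod_cast hp
  unfold primeWeight
  have : (0 : ℝ) < p - 1 := by linarith
  rw [div_pow, div_mul_eq_mul_div, div_le_one (by positivity)]
  nlinarith [mul_nonneg (mul_nonneg (sub_nonneg.mpr h7) (sub_nonneg.mpr h7)) (sub_nonneg.mpr h7)]

lemma weight_sq_mul_le {d : ℕ} (hd : Squarefree d) (hodd : Odd d) :
    weight d ^ 2 * d ≤ 30375 / 4096 := by
  -- only the factors at 3 and 5 exceed 1: they are 75 / 16 and 405 / 256
  set c : ℕ → ℝ := fun p => max (primeWeight p ^ 2 * p) 1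
  have hc : ∀ p ∈ d.primeFactors ∪ {3, 5}, p ∉ ({3, 5} : Finset ℕ) → c p = 1 := by
    intro p hp hp35
    have hpd : p ∈ d.primeFactors := by
      rcases mem_union.mp hp with h | h
      · exact h
      · exact absurd h hp35
    have hpodd : Odd p := hodd.of_dvd_nat (Nat.dvd_of_mem_primeFactors hpd)
    have h7 : 7 ≤ p := by
      have := (Nat.prime_of_mem_primeFactors hpd).two_le
      have : p ≠ 3 ∧ p ≠ 5 := by simpa using hp35
      obtain ⟨k, rfl⟩ := hpodd
      omega
    exact max_eq_right (primeWeight_sq_mul_le_one h7)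
  calc weight d ^ 2 * d = ∏ p ∈ d.primeFactors, primeWeight p ^ 2 * p := by
        rw [weight, cast_eq_prod_primeFactors_of_squarefree hd, ← prod_pow, prod_mul_distrib]
    _ ≤ ∏ p ∈ d.primeFactors, c p :=
        prod_le_prod (fun p _ => by positivity) fun p _ => le_max_left _ _
    _ ≤ ∏ p ∈ d.primeFactors ∪ {3, 5}, c p :=
        prod_le_prod_of_subset_of_one_le subset_union_left (fun p _ => by positivity)
          fun p _ _ => le_max_right _ _
    _ = ∏ p ∈ {3, 5}, c p := (prod_subset subset_union_right hc).symm
    _ = 30375 / 4096 := by norm_num [c, primeWeight]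

lemma weight_le {d : ℕ} (hd : Squarefree d) (hodd : Odd d) : weight d ≤ 3 / √d := by
  have hd0 : 0 < √d := sqrt_pos.mpr (by exact_mod_cast hodd.pos)
  have hsq : (weight d * √d) ^ 2 ≤ 3 ^ 2 := by
    rw [mul_pow, sq_sqrt d.cast_nonneg]
    linarith [weight_sq_mul_le hd hodd]
  rw [le_div_iff₀ hd0]
  exact (pow_le_pow_iff_left₀ (mul_nonneg (weight_nonneg d) hd0.le) (by norm_num)
    two_ne_zero).mp hsq

/-- The term `d = 0` is `(√0)⁻¹ = 0`. -/
lemma sum_range_succ_inv_sqrt_le (N : ℕ) : ∑ d ∈ range (N + 1), (√d)⁻¹ ≤ 2 * √N := by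
  induction N with
  | zero => simp
  | succ N ih =>
    rw [sum_range_succ]
    have hs : 0 < √(N + 1 : ℕ) := sqrt_pos.mpr (by positivity)
    have hsq : √(N + 1 : ℕ) ^ 2 = √N ^ 2 + 1 := by
      rw [sq_sqrt (Nat.cast_nonneg _), sq_sqrt (Nat.cast_nonneg _)]; push_cast; ring
    have : (√(N + 1 : ℕ))⁻¹ ≤ 2 * (√(N + 1 : ℕ) - √N) := by
      rw [inv_le_iff_one_le_mul₀ hs]
      nlinarith [sq_nonneg (√(N + 1 : ℕ) - √N)]
    linarith

lemma sum_weight_le (n : ℕ) :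
    ∑ d ∈ range (2 * n) with Squarefree d ∧ Odd d, weight d ≤ 6 * √(2 * n : ℕ) := by
  calc _ ≤ ∑ d ∈ range (2 * n) with Squarefree d ∧ Odd d, 3 * (√d)⁻¹ :=
        sum_le_sum fun d hd => by
          rw [← div_eq_mul_inv]
          exact weight_le (mem_filter.mp hd).2.1 (mem_filter.mp hd).2.2
    _ ≤ ∑ d ∈ range (2 * n + 1), 3 * (√d)⁻¹ :=
        sum_le_sum_of_subset_of_nonneg
          ((filter_subset _ _).trans (range_subset_range.mpr (by omega))) fun _ _ _ => by positivity
    _ ≤ 6 * √(2 * n : ℕ) := by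
        rw [← mul_sum]
        linarith [sum_range_succ_inv_sqrt_le (2 * n)]

lemma sum_sq_div_totient_odd_le (n : ℕ) :
    ∑ m ∈ range (2 * n) with Odd m, ((m : ℝ) / φ m) ^ 2 ≤
      n * ∑ d ∈ range (2 * n) with Squarefree d ∧ Odd d, weight d / d +
        ∑ d ∈ range (2 * n) with Squarefree d ∧ Odd d, weight d := by
  rw [sum_sq_div_totient_eq_sum_card_mul_weight (D := {d ∈ range (2 * n) | Squarefree d ∧ Odd d})
    (by simp) (fun d hd => (mem_filter.mp hd).2.1) ?hMD, mul_sum, ← sum_add_distrib]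
  case hMD =>
    intro m hm d hdm hd
    obtain ⟨hm2n, hodd⟩ := by simpa only [mem_filter, mem_range] using hm
    have hdm := Nat.dvd_of_mem_divisors hdm
    simp only [mem_filter, mem_range]
    exact ⟨(Nat.le_of_dvd hodd.pos hdm).trans_lt hm2n, hd, hodd.of_dvd_nat hdm⟩
  refine sum_le_sum fun d hd => ?_
  have hcard : (#{m ∈ {m ∈ range (2 * n) | Odd m} | d ∣ m} : ℝ) ≤ n / d + 1 := by
    rw [filter_filter]
    calc _ ≤ ((n / d + 1 : ℕ) : ℝ) := by
          exact_mod_cast card_odd_multiples_le (mem_filter.mp hd).2.2 n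
      _ ≤ n / d + 1 := by
          push_cast
          linarith [Nat.cast_div_le (α := ℝ) (m := n) (n := d)]
  calc _ ≤ (n / d + 1 : ℝ) * weight d := mul_le_mul_of_nonneg_right hcard (weight_nonneg d)
    _ = n * (weight d / d) + weight d := by ring

end OddTotientSquares

open Finset Real OddTotientSquares in
theorem stmt_10 :
    ∃ N : ℕ, ∀ n : ℕ, N ≤ n →
      ∑ m ∈ (Finset.range (2 * n)).filter (fun m => Odd m),
        ((m : ℝ) / (Nat.totient m : ℝ)) ^ 2 < 1.78 * n := by
  refine ⟨10 ^ 8, fun n hn => ?_⟩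
  have hn' : (10 ^ 8 : ℝ) ≤ n := by exact_mod_cast hn
  have hsqrt : √(2 * n : ℕ) ^ 2 = 2 * n := by rw [sq_sqrt (Nat.cast_nonneg _)]; push_cast; ring
  calc _ ≤ n * ∑ d ∈ range (2 * n) with Squarefree d ∧ Odd d, weight d / d +
        ∑ d ∈ range (2 * n) with Squarefree d ∧ Odd d, weight d := sum_sq_div_totient_odd_le n
    _ ≤ n * 1.777 + 6 * √(2 * n : ℕ) := by
        gcongr
        exacts [sum_weight_div_le (by omega), sum_weight_le n]
    _ < 1.78 * n := by nlinarith [sqrt_nonneg (2 * n : ℕ)]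
end

section
/- If m is an odd positive integer all of whose prime factors exceed 2x (x ≥ 2), and for each j ≥ 1 the number of distinct prime factors of m in the interval (4^{j−1}·2x, 4^j·2x] is at most j, then φ(m)/m > 1 − 8/(9x). -/
/-!
Since `φ m / m = ∏_{p ∣ m} (1 - 1/p) ≥ 1 - ∑_{p ∣ m} 1/p`, it suffices to bound `∑_{p ∣ m} 1/p`.
Every prime factor lies in one of the shells `(4^k · 2x, 4^(k+1) · 2x]`, the `k`-th shell
contributes at most `(k + 1) / (4^k · 2x)`, and `∑_k (k + 1) / 4^k < 16/9`, so the sum is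
below `8 / (9x)`.
-/

open Finset

theorem Finset.one_sub_sum_le_prod_one_sub {ι R : Type*} [CommRing R] [LinearOrder R]
    [IsStrictOrderedRing R] (s : Finset ι) {f : ι → R} (h0 : ∀ i ∈ s, 0 ≤ f i)
    (h1 : ∀ i ∈ s, f i ≤ 1) : 1 - ∑ i ∈ s, f i ≤ ∏ i ∈ s, (1 - f i) := by
  induction s using Finset.cons_induction with
  | empty => simp
  | cons a s ha ih =>
    simp only [forall_mem_cons] at h0 h1
    rw [sum_cons, prod_cons]
    have hsum : 0 ≤ ∑ i ∈ s, f i := sum_nonneg h0.2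
    nlinarith [mul_le_mul_of_nonneg_left (ih h0.2 h1.2) (sub_nonneg.2 h1.1)]

theorem Finset.sum_le_sum_sum_filter_of_forall_exists {α ι R : Type*}
    [AddCommMonoid R] [PartialOrder R] [IsOrderedAddMonoid R]
    (s : Finset α) (t : Finset ι) (P : ι → α → Prop) [∀ i, DecidablePred (P i)] {f : α → R}
    (hf : ∀ a ∈ s, 0 ≤ f a) (h : ∀ a ∈ s, ∃ i ∈ t, P i a) :
    ∑ a ∈ s, f a ≤ ∑ i ∈ t, ∑ a ∈ s with P i a, f a := by
  simp_rw [sum_filter]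
  rw [sum_comm]
  refine sum_le_sum fun a ha => ?_
  obtain ⟨i, hi, hPi⟩ := h a ha
  calc f a = if P i a then f a else 0 := (if_pos hPi).symm
    _ ≤ ∑ j ∈ t, if P j a then f a else 0 :=
      single_le_sum (f := fun j => if P j a then f a else 0)
        (fun j _ => by split_ifs <;> simp [hf a ha]) hi

theorem Nat.totient_div_self_eq_prod {n : ℕ} (hn : n ≠ 0) :
    (Nat.totient n : ℝ) / n = ∏ p ∈ n.primeFactors, (1 - (p : ℝ)⁻¹) := by
  have h := congrArg ((↑) : ℚ → ℝ) (Nat.totient_eq_mul_prod_factors n)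
  push_cast at h
  rw [h, mul_div_cancel_left₀ _ (Nat.cast_ne_zero.2 hn)]

theorem exists_mem_Ioc_pow_mul {r b y : ℝ} {N : ℕ} (hb : b < y) (hy : y ≤ r ^ N * b) :
    ∃ k < N, y ∈ Set.Ioc (r ^ k * b) (r ^ (k + 1) * b) := by
  classical
  have hex : ∃ n, y ≤ r ^ n * b := ⟨N, hy⟩
  have hpos : Nat.find hex ≠ 0 := fun h0 => by
    have := Nat.find_spec hex
    rw [h0, pow_zero, one_mul] at this
    exact this.not_gt hb
  refine ⟨Nat.find hex - 1, by have := Nat.find_min' hex hy; omega, ?_, ?_⟩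
  · exact not_le.1 (Nat.find_min hex (by omega))
  · rw [Nat.sub_add_cancel (Nat.one_le_iff_ne_zero.2 hpos)]
    exact Nat.find_spec hex

theorem sum_range_succ_div_four_pow (N : ℕ) :
    ∑ k ∈ range N, ((k : ℝ) + 1) / 4 ^ k = 16 / 9 - (12 * N + 16) / (9 * 4 ^ N) := by
  induction N with
  | zero => norm_num
  | succ n ih =>
    rw [sum_range_succ, ih]
    field_simp
    push_cast
    ring

theorem sum_range_succ_div_four_pow_lt (N : ℕ) :
    ∑ k ∈ range N, ((k : ℝ) + 1) / 4 ^ k < 16 / 9 := by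
  rw [sum_range_succ_div_four_pow]
  have : 0 < (12 * (N : ℝ) + 16) / (9 * 4 ^ N) := by positivity
  linarith

theorem sum_inv_le_of_card_shell_le (S : Finset ℕ) {r b : ℝ} (hr : 0 < r) (hb : 0 < b)
    (N : ℕ) (c : ℕ → ℕ) (hS : ∀ p ∈ S, b < p ∧ (p : ℝ) ≤ r ^ N * b)
    (hc : ∀ k, #(S.filter fun p : ℕ => r ^ k * b < p ∧ (p : ℝ) ≤ r ^ (k + 1) * b) ≤ c k) :
    ∑ p ∈ S, (p : ℝ)⁻¹ ≤ ∑ k ∈ range N, (c k : ℝ) / (r ^ k * b) := by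
  calc ∑ p ∈ S, (p : ℝ)⁻¹
      ≤ ∑ k ∈ range N,
          ∑ p ∈ S.filter fun p : ℕ => r ^ k * b < p ∧ (p : ℝ) ≤ r ^ (k + 1) * b, (p : ℝ)⁻¹ :=
        sum_le_sum_sum_filter_of_forall_exists _ _ _ (fun _ _ => by positivity) fun p hp => by
          obtain ⟨k, hk, hshell⟩ := exists_mem_Ioc_pow_mul (hS p hp).1 (hS p hp).2
          exact ⟨k, mem_range.2 hk, hshell⟩
    _ ≤ ∑ k ∈ range N, (c k : ℝ) / (r ^ k * b) := by
        refine sum_le_sum fun k _ => ?_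
        have hbk : 0 < r ^ k * b := by positivity
        calc _ ≤ #(S.filter fun p : ℕ => r ^ k * b < p ∧ (p : ℝ) ≤ r ^ (k + 1) * b) •
                (r ^ k * b)⁻¹ :=
              sum_le_card_nsmul _ _ _ fun p hp =>
                (inv_strictAnti₀ hbk (mem_filter.1 hp).2.1).le
          _ ≤ (c k : ℝ) / (r ^ k * b) := by
              rw [nsmul_eq_mul, div_eq_mul_inv]
              gcongr
              exact_mod_cast hc k

theorem stmt_13_general (m : ℕ) (hm : 0 < m) (x : ℝ) (hx : 2 ≤ x)
    (hbig : ∀ p : ℕ, p.Prime → p ∣ m → 2 * x < p)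
    (hfew : ∀ j : ℕ, 1 ≤ j →
      ((m.primeFactors.filter
          (fun p : ℕ => 4 ^ (j - 1) * (2 * x) < (p : ℝ) ∧ (p : ℝ) ≤ 4 ^ j * (2 * x))).card) ≤ j) :
    1 - 8 / (9 * x) < (Nat.totient m : ℝ) / m := by
  have h2x : 0 < 2 * x := by linarith
  have hshells : ∀ p ∈ m.primeFactors, 2 * x < p ∧ (p : ℝ) ≤ 4 ^ m * (2 * x) := fun p hp =>
    ⟨hbig p (Nat.prime_of_mem_primeFactors hp) (Nat.dvd_of_mem_primeFactors hp), by
      have hpm : (p : ℝ) ≤ m := by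
        exact_mod_cast Nat.le_of_dvd hm (Nat.dvd_of_mem_primeFactors hp)
      have hm4 : (m : ℝ) < 4 ^ m := by exact_mod_cast Nat.lt_pow_self (by norm_num)
      nlinarith [pow_pos (by norm_num : (0 : ℝ) < 4) m]⟩
  have hsum : ∑ p ∈ m.primeFactors, (p : ℝ)⁻¹ < 8 / (9 * x) := calc
    _ ≤ ∑ k ∈ range m, ((k + 1 : ℕ) : ℝ) / (4 ^ k * (2 * x)) :=
        sum_inv_le_of_card_shell_le _ (by norm_num) h2x m (· + 1) hshells fun k => by
          simpa using hfew (k + 1) (by omega)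
    _ = (∑ k ∈ range m, ((k : ℝ) + 1) / 4 ^ k) / (2 * x) := by
        rw [sum_div]
        refine sum_congr rfl fun k _ => ?_
        push_cast
        rw [div_div]
    _ < 16 / 9 / (2 * x) := div_lt_div_of_pos_right (sum_range_succ_div_four_pow_lt m) h2x
    _ = 8 / (9 * x) := by field_simp; ring
  rw [Nat.totient_div_self_eq_prod hm.ne']
  calc 1 - 8 / (9 * x) < 1 - ∑ p ∈ m.primeFactors, (p : ℝ)⁻¹ := by linarith
    _ ≤ ∏ p ∈ m.primeFactors, (1 - (p : ℝ)⁻¹) :=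
        one_sub_sum_le_prod_one_sub _ (fun _ _ => by positivity) fun p hp =>
          inv_le_one_of_one_le₀ (by exact_mod_cast (Nat.prime_of_mem_primeFactors hp).one_le)

theorem stmt_13 (m : ℕ) (hm : 0 < m) (hmo : Odd m) (x : ℝ) (hx : 2 ≤ x)
    (hbig : ∀ p : ℕ, p.Prime → p ∣ m → 2 * x < p)
    (hfew : ∀ j : ℕ, 1 ≤ j →
      ((m.primeFactors.filter
          (fun p : ℕ => 4 ^ (j - 1) * (2 * x) < (p : ℝ) ∧ (p : ℝ) ≤ 4 ^ j * (2 * x))).card) ≤ j) :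
    1 - 8 / (9 * x) < (Nat.totient m : ℝ) / m :=
  stmt_13_general m hm x hx hbig hfew
end

section
/- Let C_3(n) denote the number of permutations σ of {1,…,n} with gcd(j, σ(j), 6) = 1 for all j. Then C_3(6n) = ((2n)!²/n!)². -/
/-! A permutation counted by `C3 (6 * n)` sends the evens into the odds and the multiples of 3
into the non-multiples of 3; since there are as many evens as odds, it also sends the odds onto
the evens. It therefore splits into a bijection evens → odds and a bijection odds → evens, each
sending the `n` multiples of 3 of its domain into the `2 n` non-multiples of 3 of its codomain.
Such a bijection is an injection of those `n` points into `2 n` places, extended arbitrarily on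
the remaining `2 n` points: there are `(2n)!/n! · (2n)!` of them. -/

/-- The number of permutations `σ` of `{1,…,n}` (encoded as permutations of `Fin n`
via `j ↦ j+1`) with `gcd(j, σ j, 3!) = gcd(j, σ j, 6) = 1` for all `j`. -/
def C3 (n : ℕ) : ℕ :=
  Fintype.card
    {σ : Equiv.Perm (Fin n) // ∀ j, Nat.gcd (Nat.gcd (j.val + 1) ((σ j).val + 1)) 6 = 1}

open Fintype

namespace Equiv

def subtypeEquivIffEquivProd {X Y : Type*} (p : X → Prop) (r : Y → Prop) [DecidablePred p]
    [DecidablePred r] :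
    {f : X ≃ Y // ∀ x, p x ↔ r (f x)} ≃ ({x // p x} ≃ {y // r y}) × ({x // ¬p x} ≃ {y // ¬r y})
    where
  toFun f := (f.1.subtypeEquiv f.2, f.1.subtypeEquiv fun x => not_congr (f.2 x))
  invFun e := ⟨(sumCompl p).symm.trans ((e.1.sumCongr e.2).trans (sumCompl r)), fun x => by
    by_cases hx : p x
    · simp [hx, sumCompl_symm_apply_of_pos hx, (e.1 ⟨x, hx⟩).2]
    · simp [hx, sumCompl_symm_apply_of_neg hx, (e.2 ⟨x, hx⟩).2]⟩
  left_inv f := by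
    ext x
    by_cases hx : p x <;> simp [hx, sumCompl_symm_apply_of_pos, sumCompl_symm_apply_of_neg]
  right_inv e := by
    ext a
    · simp [sumCompl_symm_apply_of_pos a.2]
    · simp [sumCompl_symm_apply_of_neg a.2]

end Equiv

theorem Finset.map_filter_univ_eq_iff {X Y : Type*} [Fintype X] (p : X → Prop) [DecidablePred p]
    (f : X ≃ Y) (R : Finset Y) :
    (Finset.univ.filter p).map f.toEmbedding = R ↔ ∀ x, p x ↔ f x ∈ R := by
  refine ⟨fun h x => by simp [← h], fun h => Finset.ext fun y => ?_⟩
  simpa using h (f.symm y)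

section EquivCount

variable {X Y : Type*} [Fintype X] [Fintype Y] [DecidableEq X] [DecidableEq Y]

theorem Fintype.card_subtype_equiv_iff_and_imp (p : X → Prop) (r : Y → Prop) (b : X → Prop)
    (c : Y → Prop) [DecidablePred p] [DecidablePred r] [DecidablePred b] [DecidablePred c] :
    card {f : X ≃ Y // (∀ x, p x ↔ r (f x)) ∧ ∀ x, b x → c (f x)} =
      card {e : {x // p x} ≃ {y // r y} // ∀ a : {x // p x}, b a → c (e a)} *
        card {e : {x // ¬p x} ≃ {y // ¬r y} // ∀ a : {x // ¬p x}, b a → c (e a)} := by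
  rw [← card_prod, ← card_congr (Equiv.subtypeSubtypeEquivSubtypeInter _ _)]
  refine card_congr (((Equiv.subtypeEquivIffEquivProd p r).subtypeEquiv fun f => ?_).trans
    Equiv.subtypeProdEquivProd)
  refine ⟨fun h => ⟨fun a => h a, fun a => h a⟩, fun h x => ?_⟩
  by_cases hx : p x
  exacts [h.1 ⟨x, hx⟩, h.2 ⟨x, hx⟩]

theorem Fintype.card_subtype_equiv_iff_mem (p : X → Prop) [DecidablePred p] (h : card X = card Y)
    (R : Finset Y) (hR : R.card = card {x // p x}) :
    card {f : X ≃ Y // ∀ x, p x ↔ f x ∈ R} =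
      (card {x // p x}).factorial * (card {x // ¬p x}).factorial := by
  have hR' : card {y // y ∈ R} = card {x // p x} := by simpa using hR
  have hRc : card {y // y ∉ R} = card {x // ¬p x} := by
    rw [card_subtype_compl, card_subtype_compl, hR', h]
  rw [card_congr (Equiv.subtypeEquivIffEquivProd _ _), card_prod,
    card_equiv (equivOfCardEq hR'.symm), card_equiv (equivOfCardEq hRc.symm)]

theorem Fintype.card_subtype_equiv_imp (p : X → Prop) (q : Y → Prop) [DecidablePred p]
    [DecidablePred q] (h : card X = card Y) :
    card {f : X ≃ Y // ∀ x, p x → q (f x)} =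
      (card {y // q y}).descFactorial (card {x // p x}) * (card {x // ¬p x}).factorial := by
  set k := card {x // p x}
  set Q := Finset.univ.filter q
  -- `f` is determined by the image `R` of `{x // p x}`, a `k`-subset of `Q`, together with
  -- bijections `{x // p x} ≃ R` and `{x // ¬p x} ≃ Rᶜ`
  let image (f : {f : X ≃ Y // ∀ x, p x → q (f x)}) : Finset Y :=
    (Finset.univ.filter p).map f.1.toEmbedding
  have himage (f) : image f ∈ Q.powersetCard k := by
    rw [Finset.mem_powersetCard, Finset.card_map, ← card_subtype]
    refine ⟨fun y hy => ?_, rfl⟩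
    obtain ⟨x, hx, rfl⟩ := Finset.mem_map.mp hy
    simpa [Q] using f.2 x (by simpa using hx)
  have hfiber (R) (hR : R ∈ Q.powersetCard k) :
      (Finset.univ.filter fun f => image f = R).card =
        k.factorial * (card {x // ¬p x}).factorial := by
    rw [Finset.mem_powersetCard] at hR
    rw [← card_subtype_equiv_iff_mem p h R hR.2, ← card_subtype]
    refine card_congr ((Equiv.subtypeSubtypeEquivSubtypeInter _
      fun f : X ≃ Y => (Finset.univ.filter p).map f.toEmbedding = R).trans
        (Equiv.subtypeEquivRight fun f => ?_))
    rw [Finset.map_filter_univ_eq_iff]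
    refine ⟨And.right, fun hf => ⟨fun x hx => ?_, hf⟩⟩
    simpa [Q] using hR.1 ((hf x).mp hx)
  rw [← Finset.card_univ, Finset.card_eq_sum_card_fiberwise fun f _ => himage f,
    Finset.sum_congr rfl hfiber, Finset.sum_const, Finset.card_powersetCard, smul_eq_mul,
    Nat.descFactorial_eq_factorial_mul_choose, ← card_subtype q]
  ring

end EquivCount

theorem Equiv.Perm.forall_iff_not_of_forall_imp_not {X : Type*} [Fintype X] (p : X → Prop)
    [DecidablePred p] (σ : Equiv.Perm X) (h : ∀ x, p x → ¬p (σ x))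
    (hcard : card {x // ¬p x} ≤ card {x // p x}) : ∀ x, p x ↔ ¬p (σ x) := by
  set P := Finset.univ.filter p
  have himage : P.map σ.toEmbedding = Finset.univ.filter fun x => ¬p x := by
    refine Finset.eq_of_subset_of_card_le (fun y hy => ?_) ?_
    · obtain ⟨x, hx, rfl⟩ := Finset.mem_map.mp hy
      simpa using h x (by simpa [P] using hx)
    · simpa [P, card_subtype] using hcard
  intro x
  refine ⟨h x, fun hx => ?_⟩
  have : σ x ∈ P.map σ.toEmbedding := by simpa [himage] using hx
  simpa [P] using this

theorem Equiv.Perm.card_subtype_forall_imp_not_and_imp_not {X : Type*} [Fintype X]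
    [DecidableEq X] (p b : X → Prop) [DecidablePred p] [DecidablePred b]
    (hp : card {x // p x} = card {x // ¬p x}) :
    card {σ : Equiv.Perm X // ∀ x, (p x → ¬p (σ x)) ∧ (b x → ¬b (σ x))} =
      (card {x // ¬p x ∧ ¬b x}).descFactorial (card {x // p x ∧ b x}) *
          (card {x // p x ∧ ¬b x}).factorial *
        ((card {x // p x ∧ ¬b x}).descFactorial (card {x // ¬p x ∧ b x}) *
          (card {x // ¬p x ∧ ¬b x}).factorial) := by
  have hnp : card {x // ¬p x} = card {x // ¬¬p x} :=
    hp.symm.trans (card_congr (Equiv.subtypeEquivRight fun _ => not_not.symm))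
  have hswap (σ : Equiv.Perm X) : (∀ x, (p x → ¬p (σ x)) ∧ (b x → ¬b (σ x))) ↔
      (∀ x, p x ↔ ¬p (σ x)) ∧ ∀ x, b x → ¬b (σ x) :=
    ⟨fun h => ⟨σ.forall_iff_not_of_forall_imp_not p (fun x => (h x).1) hp.ge, fun x => (h x).2⟩,
      fun h x => ⟨(h.1 x).mp, h.2 x⟩⟩
  rw [card_congr (Equiv.subtypeEquivRight hswap)]
  refine (card_subtype_equiv_iff_and_imp p (fun x => ¬p x) b fun x => ¬b x).trans ?_
  rw [card_subtype_equiv_imp (fun a : {x // p x} => b a) (fun a : {x // ¬p x} => ¬b a) hp,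
    card_subtype_equiv_imp (fun a : {x // ¬p x} => b a) (fun a : {x // ¬¬p x} => ¬b a) hnp,
    card_congr (Equiv.subtypeSubtypeEquivSubtypeInter p b),
    card_congr (Equiv.subtypeSubtypeEquivSubtypeInter p fun x => ¬b x),
    card_congr (Equiv.subtypeSubtypeEquivSubtypeInter (fun x => ¬p x) b),
    card_congr (Equiv.subtypeSubtypeEquivSubtypeInter (fun x => ¬p x) fun x => ¬b x),
    card_congr (Equiv.subtypeSubtypeEquivSubtypeInter (fun x => ¬¬p x) fun x => ¬b x)]
  simp only [not_not]

theorem Nat.gcd_gcd_six_eq_one_iff (u v : ℕ) :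
    Nat.gcd (Nat.gcd u v) 6 = 1 ↔ (2 ∣ u → ¬2 ∣ v) ∧ (3 ∣ u → ¬3 ∣ v) := by
  rw [← Nat.coprime_iff_gcd_eq_one, show (6 : ℕ) = 2 * 3 from rfl, Nat.coprime_mul_iff_right,
    Nat.coprime_comm, Nat.Prime.coprime_iff_not_dvd Nat.prime_two, Nat.coprime_comm,
    Nat.Prime.coprime_iff_not_dvd Nat.prime_three, Nat.dvd_gcd_iff, Nat.dvd_gcd_iff]
  tauto

theorem Nat.count_mul_of_periodic {P : ℕ → Prop} [DecidablePred P] {d : ℕ}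
    (hP : Function.Periodic P d) (n : ℕ) : Nat.count P (d * n) = n * Nat.count P d := by
  induction n with
  | zero => simp
  | succ n ih =>
    have hshift : (fun k => P (d * n + k)) = P := funext fun k => by
      rw [add_comm, mul_comm]; exact hP.nat_mul n k
    simp only [Nat.mul_succ, Nat.count_add, ih, hshift, Nat.succ_mul]

open scoped Count in
theorem Fin.card_subtype_eq_count (P : ℕ → Prop) [DecidablePred P] (m : ℕ) :
    card {x : Fin m // P x} = Nat.count P m := by
  rw [Nat.count_eq_card_fintype]
  exact card_congr ((Fin.equivSubtype.subtypeEquiv fun _ => Iff.rfl).trans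
    (Equiv.subtypeSubtypeEquivSubtypeInter _ _))

theorem stmt_18 (n : ℕ) :
    C3 (6 * n) = ((2 * n).factorial ^ 2 / n.factorial) ^ 2 := by
  have cell (P : ℕ → Prop) [DecidablePred P] (hP : Function.Periodic P 6) {c : ℕ}
      (hc : Nat.count P 6 = c) : card {x : Fin (6 * n) // P x} = c * n := by
    rw [Fin.card_subtype_eq_count, Nat.count_mul_of_periodic hP, hc, mul_comm]
  have hparity :
      card {x : Fin (6 * n) // 2 ∣ x.val + 1} = card {x : Fin (6 * n) // ¬2 ∣ x.val + 1} :=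
    (cell (fun k => 2 ∣ k + 1) (fun k => propext (by omega)) (c := 3) (by decide)).trans
      (cell (fun k => ¬2 ∣ k + 1) (fun k => propext (by omega)) (c := 3) (by decide)).symm
  have hdesc : n.factorial * (2 * n).descFactorial n = (2 * n).factorial := by
    simpa [two_mul] using Nat.factorial_mul_descFactorial (Nat.le_add_left n n)
  rw [C3]
  convert Equiv.Perm.card_subtype_forall_imp_not_and_imp_not (fun x : Fin (6 * n) => 2 ∣ x.val + 1)
      (fun x => 3 ∣ x.val + 1) hparity using 1
  · rw [card_congr (Equiv.subtypeEquivRight fun σ => forall_congr' fun j =>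
      Nat.gcd_gcd_six_eq_one_iff _ _)]
    -- the two sides differ only in the `Decidable` instance of the `∀` over `Fin (6 * n)`
    convert rfl
  rw [cell (fun k => 2 ∣ k + 1 ∧ 3 ∣ k + 1) (fun k => propext (by omega)) (c := 1) (by decide),
    cell (fun k => 2 ∣ k + 1 ∧ ¬3 ∣ k + 1) (fun k => propext (by omega)) (c := 2) (by decide),
    cell (fun k => ¬2 ∣ k + 1 ∧ 3 ∣ k + 1) (fun k => propext (by omega)) (c := 1) (by decide),
    cell (fun k => ¬2 ∣ k + 1 ∧ ¬3 ∣ k + 1) (fun k => propext (by omega)) (c := 2) (by decide),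
    one_mul, ← hdesc, mul_pow, sq n.factorial, mul_assoc,
    Nat.mul_div_cancel_left _ n.factorial_pos]
  ring
end
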